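/- arXiv:1309.6695 — 6 statements merged into one kernel-verified Lean document; each statement's English description precedes it below -/
import Mathlib

section
/- If a symmetric measurable function W : [0,1]² → [0,1] satisfies, for almost every pair (x,x') ∈ A × A (A ⊆ [0,1] measurable with |A| > 0, B ⊆ [0,1] measurable), both ∫_B W(x,y) dy = |B|·p and ∫_B W(x,y)W(x',y) dy = |B|·p², then W(x,y) = p for almost every (x,y) ∈ A × B. -/
/-!
Write `f x := W x · - p`. The two moment conditions say exactly that `f x` and `f x'` are
orthogonal in `L²(B)` for almost every `(x, x') ∈ A × A`. Integrating this over `S × S` and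
using Fubini gives `‖∫_S f x dx‖² = 0`, i.e. `∫_S (W x y - p) dx = 0` for a.e. `y ∈ B`. Taking
`S = A ∩ (-∞, q]` for the countably many rationals `q`, which generate the Borel sets, forces
`W · y = p` a.e. on `A` for a.e. `y ∈ B`.
-/

open MeasureTheory Set Filter

theorem MeasureTheory.Integrable.ae_eq_zero_of_forall_setIntegral_Iic_rat_eq_zero {E : Type*}
    [NormedAddCommGroup E] [NormedSpace ℝ E] [CompleteSpace E] {μ : Measure ℝ} {f : ℝ → E}
    (hf : Integrable f μ)
    (h : ∀ q : ℚ, ∫ x in Iic (q : ℝ), f x ∂μ = 0) : f =ᵐ[μ] 0 := by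
  have h_univ : ∫ x, f x ∂μ = 0 := by
    have hlim := tendsto_setIntegral_of_monotone (μ := μ) (s := fun q : ℚ => Iic (q : ℝ))
      (fun _ => measurableSet_Iic) (fun _ _ hqr => Iic_subset_Iic.2 (by exact_mod_cast hqr))
      hf.integrableOn
    rw [Real.iUnion_Iic_rat, setIntegral_univ] at hlim
    exact tendsto_nhds_unique hlim (by simpa only [h] using tendsto_const_nhds)
  suffices ∀ s, MeasurableSet s → ∫ x in s, f x ∂μ = 0 from
    hf.ae_eq_zero_of_forall_setIntegral_eq_zero fun s hs _ => this s hs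
  intro s hs
  induction s, hs using MeasurableSpace.induction_on_inter Real.borel_eq_generateFrom_Iic_rat
    Real.isPiSystem_Iic_rat with
  | empty => simp
  | basic t ht =>
    obtain ⟨q, rfl⟩ := mem_iUnion.1 ht
    exact h q
  | compl t ht iht => rw [setIntegral_compl ht hf, h_univ, iht, sub_zero]
  | iUnion t hdisj hmeas iht => simp [integral_iUnion hmeas hdisj hf.integrableOn, iht]

theorem integral_sub_const_mul_sub_const {α : Type*} [MeasurableSpace α] {ν : Measure α}
    [IsFiniteMeasure ν] {f g : α → ℝ} (hf : Integrable f ν) (hg : Integrable g ν)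
    (hfg : Integrable (fun y => f y * g y) ν) (a b : ℝ) :
    ∫ y, (f y - a) * (g y - b) ∂ν
      = ∫ y, f y * g y ∂ν - b * ∫ y, f y ∂ν - a * ∫ y, g y ∂ν + a * b * ν.real univ := by
  have hexp : (fun y => (f y - a) * (g y - b))
      = fun y => (f y * g y - b * f y) - (a * g y - a * b) := by ext; ring
  have h₁ : Integrable (fun y => f y * g y - b * f y) ν := hfg.sub (hf.const_mul b)
  have h₂ : Integrable (fun y => a * g y - a * b) ν := (hg.const_mul a).sub (integrable_const _)
  rw [hexp, integral_sub h₁ h₂, integral_sub hfg (hf.const_mul b),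
    integral_sub (hg.const_mul a) (integrable_const _),
    integral_const_mul, integral_const_mul, integral_const, smul_eq_mul]
  ring

section Orthogonal

variable {β : Type*} [MeasurableSpace β] {ν : Measure β} [IsFiniteMeasure ν] {C : ℝ}

theorem ae_integral_eq_zero_of_ae_integral_mul_eq_zero {α : Type*} [MeasurableSpace α]
    {μ : Measure α} [IsFiniteMeasure μ] {F : α → β → ℝ} (hF : Measurable (Function.uncurry F))
    (hFC : ∀ x y, ‖F x y‖ ≤ C)
    (horth : ∀ᵐ z ∂μ.prod μ, ∫ y, F z.1 y * F z.2 y ∂ν = 0) :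
    ∀ᵐ y ∂ν, ∫ x, F x y ∂μ = 0 := by
  set G : β → α × α → ℝ := fun y z => F z.1 y * F z.2 y
  have hG : Integrable (Function.uncurry G) (ν.prod (μ.prod μ)) := by
    refine Integrable.of_bound ?_ (C * C) (Eventually.of_forall fun w => ?_)
    · exact ((hF.comp (measurable_snd.fst.prodMk measurable_fst)).mul
        (hF.comp (measurable_snd.snd.prodMk measurable_fst))).aestronglyMeasurable
    · simpa only [Function.uncurry, G, norm_mul] using
        mul_le_mul (hFC _ _) (hFC _ _) (norm_nonneg _) ((norm_nonneg _).trans (hFC w.2.1 w.1))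
  have hsq : ∀ y, (∫ x, F x y ∂μ) ^ 2 = ∫ z, G y z ∂μ.prod μ := fun y => by
    rw [integral_prod_mul (fun x => F x y) (fun x => F x y), sq]
  have hzero : ∫ y, (∫ x, F x y ∂μ) ^ 2 ∂ν = 0 := by
    simp only [hsq]
    rw [integral_integral_swap hG]
    exact integral_eq_zero_of_ae horth
  have hsq_int : Integrable (fun y => (∫ x, F x y ∂μ) ^ 2) ν := by
    simp only [hsq]
    exact hG.integral_prod_left
  filter_upwards [(integral_eq_zero_iff_of_nonneg (fun y => sq_nonneg _) hsq_int).1 hzero]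
    with y hy
  exact pow_eq_zero_iff two_ne_zero |>.1 hy

theorem ae_eq_zero_of_ae_integral_mul_eq_zero {μ : Measure ℝ} [IsFiniteMeasure μ]
    {F : ℝ → β → ℝ} (hF : Measurable (Function.uncurry F)) (hFC : ∀ x y, ‖F x y‖ ≤ C)
    (horth : ∀ᵐ z ∂μ.prod μ, ∫ y, F z.1 y * F z.2 y ∂ν = 0) :
    ∀ᵐ z ∂μ.prod ν, F z.1 z.2 = 0 := by
  have hIic : ∀ q : ℚ, ∀ᵐ y ∂ν, ∫ x in Iic (q : ℝ), F x y ∂μ = 0 := fun q =>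
    ae_integral_eq_zero_of_ae_integral_mul_eq_zero hF hFC <| horth.filter_mono
      (Measure.absolutelyContinuous_restrict.prod Measure.absolutelyContinuous_restrict).ae_le
  have hcol : ∀ᵐ y ∂ν, ∀ᵐ x ∂μ, F x y = 0 := by
    filter_upwards [ae_all_iff.2 hIic] with y hy
    have hint : Integrable (F · y) μ := Integrable.of_bound
      (hF.comp measurable_prodMk_right).aestronglyMeasurable C (Eventually.of_forall (hFC · y))
    exact hint.ae_eq_zero_of_forall_setIntegral_Iic_rat_eq_zero hy
  have hmeas : MeasurableSet {z : ℝ × β | F z.1 z.2 = 0} := hF (measurableSet_singleton 0)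
  exact (Measure.ae_prod_iff_ae_ae hmeas).2 ((Measure.ae_ae_comm hmeas).2 hcol)

end Orthogonal

theorem forced_constant_on_block_general
    (W : ℝ → ℝ → ℝ) (hWmeas : Measurable (Function.uncurry W))
    (hW0 : ∀ x y, 0 ≤ W x y) (hW1 : ∀ x y, W x y ≤ 1)
    (A B : Set ℝ)
    (hAsub : A ⊆ Set.Icc 0 1) (hBsub : B ⊆ Set.Icc 0 1)
    (p : ℝ)
    (hmom : ∀ᵐ q ∂((volume.restrict A).prod (volume.restrict A)),
      (∫ y in B, W q.1 y) = (volume B).toReal * p ∧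
      (∫ y in B, W q.1 y * W q.2 y) = (volume B).toReal * p ^ 2) :
    ∀ᵐ q ∂((volume.restrict A).prod (volume.restrict B)), W q.1 q.2 = p := by
  have : IsFiniteMeasure (volume.restrict A) :=
    isFiniteMeasure_restrict.2 (measure_lt_top_of_subset hAsub measure_Icc_lt_top.ne).ne
  have : IsFiniteMeasure (volume.restrict B) :=
    isFiniteMeasure_restrict.2 (measure_lt_top_of_subset hBsub measure_Icc_lt_top.ne).ne
  have hWnorm : ∀ x y, ‖W x y‖ ≤ 1 := fun x y => by
    rw [Real.norm_eq_abs, abs_of_nonneg (hW0 x y)]; exact hW1 x y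
  have hrow : ∀ x, Integrable (W x) (volume.restrict B) := fun x =>
    Integrable.of_bound (hWmeas.comp measurable_prodMk_left).aestronglyMeasurable 1
      (Eventually.of_forall (hWnorm x))
  have hrow_mul : ∀ x x', Integrable (fun y => W x y * W x' y) (volume.restrict B) := fun x x' =>
    (hrow x).mul_bdd (hrow x').1 (Eventually.of_forall (hWnorm x'))
  have hmean_snd : ∀ᵐ q ∂((volume.restrict A).prod (volume.restrict A)),
      ∫ y in B, W q.2 y = (volume B).toReal * p := by
    simpa using
      Measure.measurePreserving_swap.quasiMeasurePreserving.ae (hmom.mono fun _ hq => hq.1)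
  have horth : ∀ᵐ q ∂((volume.restrict A).prod (volume.restrict A)),
      ∫ y in B, (W q.1 y - p) * (W q.2 y - p) = 0 := by
    filter_upwards [hmom, hmean_snd] with q ⟨hmean, hcorr⟩ hmean'
    rw [integral_sub_const_mul_sub_const (hrow _) (hrow _) (hrow_mul _ _), hcorr, hmean, hmean',
      measureReal_restrict_apply_univ]
    simp only [Measure.real]
    ring
  have hbound : ∀ x y, ‖W x y - p‖ ≤ 1 + ‖p‖ := fun x y =>
    (norm_sub_le _ _).trans (add_le_add_left (hWnorm x y) _)
  filter_upwards [ae_eq_zero_of_ae_integral_mul_eq_zero (F := fun x y => W x y - p)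
    (hWmeas.sub measurable_const) hbound horth] with q hq
  exact sub_eq_zero.1 hq

/-- If a symmetric measurable `W : [0,1]² → [0,1]` satisfies, for almost every pair
`(x,x') ∈ A × A`, both `∫_B W(x,y) dy = |B|·p` and `∫_B W(x,y)W(x',y) dy = |B|·p²`,
then `W(x,y) = p` for almost every `(x,y) ∈ A × B`. -/
theorem forced_constant_on_block
    (W : ℝ → ℝ → ℝ) (hWmeas : Measurable (Function.uncurry W))
    (hWsymm : ∀ x y, W x y = W y x)
    (hW0 : ∀ x y, 0 ≤ W x y) (hW1 : ∀ x y, W x y ≤ 1)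
    (A B : Set ℝ) (hA : MeasurableSet A) (hB : MeasurableSet B)
    (hAsub : A ⊆ Set.Icc 0 1) (hBsub : B ⊆ Set.Icc 0 1)
    (hApos : 0 < volume A) (hBpos : 0 < volume B)
    (p : ℝ) (hp : p ∈ Set.Icc (0:ℝ) 1)
    (hmom : ∀ᵐ q ∂((volume.restrict A).prod (volume.restrict A)),
      (∫ y in B, W q.1 y) = (volume B).toReal * p ∧
      (∫ y in B, W q.1 y * W q.2 y) = (volume B).toReal * p ^ 2) :
    ∀ᵐ q ∂((volume.restrict A).prod (volume.restrict B)), W q.1 q.2 = p :=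
  forced_constant_on_block_general W hWmeas hW0 hW1 A B hAsub hBsub p hmom
end

section
/- Let 𝒥 be a collection of pairwise disjoint nonempty open subintervals of (0, 1/9) such that every J ∈ 𝒥 satisfies inf J = 1/9 − 2·|J| (where |J| denotes the length of J). Then 𝒥 is countable and the natural linear order on 𝒥 (by position in the interval) is a well-order. -/
/-- A collection of pairwise disjoint nonempty open subintervals of `(0, 1/9)`, each
satisfying `inf J = 1/9 − 2·|J|`, is countable and well-ordered by position. -/
theorem intervals_countable_wellordered
    (𝒥 : Set (Set ℝ))
    (hint : ∀ J ∈ 𝒥, ∃ a b : ℝ, a < b ∧ J = Set.Ioo a b ∧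
      0 ≤ a ∧ b ≤ 1 / 9 ∧ a = 1 / 9 - 2 * (b - a))
    (hdisj : 𝒥.Pairwise Disjoint) :
    𝒥.Countable ∧ 𝒥.WellFoundedOn (fun J J' => sSup J ≤ sInf J' ∧ J ≠ J') := by
  constructor
  · exact Set.PairwiseDisjoint.countable_of_isOpen hdisj
      (fun J hJ => by obtain ⟨a, b, hab, rfl, _⟩ := hint J hJ; exact isOpen_Ioo)
      (fun J hJ => by obtain ⟨a, b, hab, rfl, _⟩ := hint J hJ
                      exact Set.nonempty_Ioo.2 hab)
  · set f : Set ℝ → ℕ := fun J => (⌊(1/18 : ℝ)/(1/9 - sSup J)⌋).toNat with hf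
    have key : ∀ J ∈ 𝒥, ∀ J' ∈ 𝒥, sSup J' ≤ sInf J → f J' < f J := by
      intro J hJ J' hJ' hle
      obtain ⟨a, b, hab, rfl, ha0, hb9, heq⟩ := hint J hJ
      obtain ⟨a', b', hab', rfl, ha0', hb9', heq'⟩ := hint J' hJ'
      rw [csSup_Ioo hab', csInf_Ioo hab] at hle
      simp only [hf, csSup_Ioo hab, csSup_Ioo hab']
      -- lengths
      have hlen : (0:ℝ) < 1/9 - b := by linarith
      have hlen18 : 1/9 - b ≤ 1/18 := by linarith
      have hdouble : 2 * (1/9 - b) ≤ 1/9 - b' := by linarith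
      have hlen' : (0:ℝ) < 1/9 - b' := by linarith
      set x : ℝ := (1/18) / (1/9 - b) with hx
      set x' : ℝ := (1/18) / (1/9 - b') with hx'
      have hx1 : (1:ℝ) ≤ x := (one_le_div hlen).2 hlen18
      have hxx' : x' ≤ x / 2 := by
        have h1 : x' ≤ (1/18) / (2 * (1/9 - b)) :=
          div_le_div_of_nonneg_left (by norm_num) (by linarith) hdouble
        have h2 : (1/18 : ℝ) / (2 * (1/9 - b)) = x / 2 := by
          rw [hx]; field_simp
        linarith
      have hfloor : (⌊x'⌋ : ℝ) + 1 ≤ x := by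
        rcases le_or_gt 2 x with h2 | h2
        · have := Int.floor_le x'
          linarith
        · have hx'lt : x' < 1 := by linarith
          have h0 : ⌊x'⌋ < (1 : ℤ) := Int.floor_lt.2 (by exact_mod_cast hx'lt)
          have : (⌊x'⌋ : ℝ) ≤ 0 := by exact_mod_cast Int.lt_add_one_iff.1 h0
          linarith
      have hlt : ⌊x'⌋ < ⌊x⌋ := by
        have : ⌊x'⌋ + 1 ≤ ⌊x⌋ := Int.le_floor.2 (by push_cast; linarith)
        omega
      have hpos : 1 ≤ ⌊x⌋ := Int.le_floor.2 (by exact_mod_cast hx1)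
      omega
    have hwf : WellFounded fun a b : 𝒥 =>
        (fun J J' : Set ℝ => sSup J ≤ sInf J' ∧ J ≠ J') a.1 b.1 := by
      apply Subrelation.wf (r := fun a b : 𝒥 => f a.1 < f b.1)
      · intro a b hab
        exact key _ b.2 _ a.2 hab.1
      · exact InvImage.wf (fun a : 𝒥 => f a.1) Nat.lt_wfRel.wf
    exact hwf
end

section
/- Let 𝒥 be a collection of pairwise disjoint open subintervals of (0, 1/9), each satisfying inf J = 1/9 − 2|J|, enumerated in increasing order as J₁, J₂, …. If additionally ∑_{J∈𝒥} |J|² = 1/243, then Jₖ = ((1 − 2^{1−k})/9, (1 − 2^{−k})/9) for every k ≥ 1. -/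
/-- Let `J 0, J 1, …` enumerate, in increasing order, pairwise disjoint open subintervals
of `(0, 1/9)` each satisfying `inf J = 1/9 − 2|J|`.  If `∑ |J|² = 1/243`, then the `k`-th
interval (in the paper's 1-based indexing, `J (k-1)` here) is
`((1 − 2^{1−k})/9, (1 − 2^{−k})/9)`, i.e. `J n = ((1 − 2^{−n})/9, (1 − 2^{−n−1})/9)`. -/
theorem intervals_determined
    (J : ℕ → Set ℝ)
    (hint : ∀ n, ∃ a b : ℝ, a < b ∧ J n = Set.Ioo a b ∧
      0 ≤ a ∧ b ≤ 1 / 9 ∧ a = 1 / 9 - 2 * (b - a))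
    (hdisj : Pairwise (Function.onFun Disjoint J))
    (hord : ∀ n, sSup (J n) ≤ sInf (J (n + 1)))
    (hsum : (∑' n : ℕ, (sSup (J n) - sInf (J n)) ^ 2) = 1 / 243) :
    ∀ n : ℕ, J n = Set.Ioo ((1 - (2:ℝ)^(-(n:ℝ))) / 9) ((1 - (2:ℝ)^(-(n:ℝ)-1)) / 9) := by
  choose a b hab hJ ha hb heq using hint
  have hSup : ∀ n, sSup (J n) = b n := fun n => by rw [hJ n]; exact csSup_Ioo (hab n)
  have hInf : ∀ n, sInf (J n) = a n := fun n => by rw [hJ n]; exact csInf_Ioo (hab n)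
  obtain ⟨ℓ, hℓdef⟩ : ∃ ℓ : ℕ → ℝ, ∀ n, ℓ n = b n - a n := ⟨_, fun _ => rfl⟩
  have hℓpos : ∀ n, 0 < ℓ n := fun n => (hℓdef n) ▸ sub_pos.2 (hab n)
  have hℓ0 : ∀ n, ℓ n ≤ 1 / 18 := by
    intro n; have h1 := ha n; have h2 := heq n
    rw [hℓdef]; linarith
  have hhalf : ∀ n, ℓ (n + 1) ≤ ℓ n / 2 := by
    intro n
    have h := hord n
    rw [hSup, hInf] at h
    have h1 := heq n; have h2 := heq (n + 1)
    rw [hℓdef, hℓdef]; linarith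
  have hbound : ∀ n, ℓ n ≤ (1 / 18) * (1 / 2) ^ n := by
    intro n; induction n with
    | zero => simpa using hℓ0 0
    | succ k ih =>
      have := hhalf k
      rw [pow_succ]; linarith
  have hg : Summable (fun n : ℕ => (1 / 324 : ℝ) * (1 / 4) ^ n) :=
    (summable_geometric_of_lt_one (by norm_num) (by norm_num)).mul_left _
  have hf_le : ∀ n, (ℓ n) ^ 2 ≤ (1 / 324 : ℝ) * (1 / 4) ^ n := by
    intro n
    have h := hbound n
    have hp := (hℓpos n).le
    have : ((1 / 18 : ℝ) * (1 / 2) ^ n) ^ 2 = 1 / 324 * (1 / 4) ^ n := by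
      rw [mul_pow, ← pow_mul, mul_comm n 2, pow_mul]; norm_num
    have hc : (0:ℝ) < 1 / 18 * (1 / 2) ^ n := by positivity
    nlinarith [mul_nonneg (sub_nonneg.2 h) (add_pos hc (hℓpos n)).le]
  have hf : Summable (fun n : ℕ => (ℓ n) ^ 2) :=
    Summable.of_nonneg_of_le (fun n => sq_nonneg _) hf_le hg
  have hgsum : (∑' n : ℕ, (1 / 324 : ℝ) * (1 / 4) ^ n) = 1 / 243 := by
    rw [tsum_mul_left, tsum_geometric_of_lt_one (by norm_num) (by norm_num)]
    norm_num
  have hsum' : (∑' n : ℕ, (ℓ n) ^ 2) = 1 / 243 := by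
    rw [← hsum]
    congr 1; funext n; rw [hSup, hInf, hℓdef]
  have heach : ∀ n, (ℓ n) ^ 2 = (1 / 324 : ℝ) * (1 / 4) ^ n := by
    intro n
    by_contra hne
    have hlt : (ℓ n) ^ 2 < 1 / 324 * (1 / 4) ^ n := lt_of_le_of_ne (hf_le n) hne
    have := Summable.tsum_lt_tsum hf_le hlt hf hg
    rw [hsum', hgsum] at this
    exact lt_irrefl _ this
  have hℓeq : ∀ n, ℓ n = (1 / 18) * (1 / 2) ^ n := by
    intro n
    have h1 := heach n
    have h2 := hbound n
    have h3 := hℓpos n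
    have h4 : ((1 / 18 : ℝ) * (1 / 2) ^ n) ^ 2 = 1 / 324 * (1 / 4) ^ n := by
      rw [mul_pow, ← pow_mul, mul_comm n 2, pow_mul]; norm_num
    have hc : (0:ℝ) < 1 / 18 * (1 / 2) ^ n := by positivity
    have h5 : ℓ n ^ 2 = (1 / 18 * (1 / 2) ^ n) ^ 2 := h1.trans h4.symm
    have h6 : (ℓ n - 1 / 18 * (1 / 2) ^ n) * (ℓ n + 1 / 18 * (1 / 2) ^ n) = 0 := by
      linear_combination h5
    rcases mul_eq_zero.1 h6 with h7 | h7
    · linarith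
    · linarith
  intro n
  have hr : (2:ℝ) ^ (-(n:ℝ)) = (1 / 2 : ℝ) ^ n := by
    rw [Real.rpow_neg (by norm_num), Real.rpow_natCast, one_div, inv_pow]
  have hr2 : (2:ℝ) ^ (-(n:ℝ) - 1) = (1 / 2 : ℝ) ^ (n + 1) := by
    rw [show (-(n:ℝ) - 1) = -(((n + 1 : ℕ) : ℝ)) by push_cast; ring]
    rw [Real.rpow_neg (by norm_num), Real.rpow_natCast, one_div, inv_pow]
  have hℓn : b n - a n = (1 / 18) * (1 / 2) ^ n := (hℓdef n) ▸ hℓeq n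
  have han : a n = (1 - (2:ℝ) ^ (-(n:ℝ))) / 9 := by
    rw [hr]; have := heq n; linarith
  have hbn : b n = (1 - (2:ℝ) ^ (-(n:ℝ) - 1)) / 9 := by
    rw [hr2, pow_succ]; have := heq n; linarith
  rw [hJ n, han, hbn]
end

section
/- For each i ∈ ℕ and δ ∈ (0,1), define g_{i,δ} ∈ L¹[0,1] and g ∈ L¹[0,1] as in the Rademacher graphon construction. Then ‖g_{i,δ} − g‖₁ = ((4 + 2δ)·2^{−i} + 2δ)/9. -/
open MeasureTheory Set
open scoped Classical

noncomputable section

/-- For `z ∈ [0,1)`, `brk z` is the smallest `k` with `z + 2^{-k} < 1`. -/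
def brk (z : ℝ) : ℕ := sInf {k : ℕ | z + (1/2 : ℝ) ^ k < 1}

/-- The eight parts of the Rademacher graphon, as subintervals of `[0,1]`;
all have length `1/9` except `pC`, of length `2/9`. -/
def pA : Set ℝ := Ico 0 (1/9)
def pA' : Set ℝ := Ico (1/9) (2/9)
def pB : Set ℝ := Ico (2/9) (3/9)
def pB' : Set ℝ := Ico (3/9) (4/9)
def pB'' : Set ℝ := Ico (4/9) (5/9)
def pC : Set ℝ := Ico (5/9) (7/9)
def pC' : Set ℝ := Ico (7/9) (8/9)
def pD : Set ℝ := Ico (8/9) 1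

/-- One-sided description of the Rademacher graphon; coordinates inside each part are
relative positions (`9*x - …`, and `(9*x-5)/2` inside `pC`). -/
def WRo (x y : ℝ) : ℝ :=
  if x ∈ pA ∧ y ∈ pA then (if brk (9*x) ≠ brk (9*y) then 1 else 0)
  else if x ∈ pA' ∧ y ∈ pA' then (if brk (9*x-1) ≠ brk (9*y-1) then 1 else 0)
  else if x ∈ pA ∧ y ∈ pA' then (if brk (9*x) = brk (9*y-1) then 1 else 0)
  else if x ∈ pA ∧ y ∈ pB then (if 9*x + (9*y-2) ≤ 1 then 1 else 0)
  else if x ∈ pA ∧ y ∈ pB'' then (if 1 ≤ 9*x + (9*y-4) then 1 else 0)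
  else if x ∈ pA' ∧ y ∈ pB' then (if (9*x-1) + (9*y-3) ≤ 1 then 1 else 0)
  else if x ∈ pA' ∧ y ∈ pB'' then (if 9*y-4 ≤ 9*x-1 then 1 else 0)
  else if x ∈ pB ∧ y ∈ pB then (if 1 ≤ (9*x-2) + (9*y-2) then 1 else 0)
  else if x ∈ pB' ∧ y ∈ pB' then (if 1 ≤ (9*x-3) + (9*y-3) then 1 else 0)
  else if x ∈ pA ∧ y ∈ pC then
    (if Even ⌊(9*y-5)/2 * (2:ℝ) ^ brk (9*x)⌋ then 1 else 0)
  else if x ∈ pA' ∧ y ∈ pC' then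
    (if (1 - (1/2:ℝ) ^ brk (9*x-1) - (9*x-1)) * (2:ℝ) ^ brk (9*x-1) + (9*y-7) ≤ 1
      then 1 else 0)
  else if x ∈ pC' ∧ y ∈ pC' then (if 1 ≤ (9*x-7) + (9*y-7) then 1 else 0)
  else if x ∈ pA' ∧ y ∈ pC then
    (if Even ⌊(9*y-5)/2 * (2:ℝ) ^ brk (9*x-1)⌋
      then (1 - (1/2:ℝ) ^ brk (9*x-1) - (9*x-1)) * (2:ℝ) ^ brk (9*x-1) else 0)
  else if x ∈ pC ∧ y ∈ pC then (if 1 ≤ (9*x-5)/2 + (9*y-5)/2 then 3/4 else 0)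
  else if (x ∈ pA' ∨ x ∈ pB') ∧ y ∈ pD then 0.2
  else if x ∈ pB'' ∧ y ∈ pD then 0.4
  else if x ∈ pC' ∧ y ∈ pD then 0.8
  else 0

/-- The Rademacher graphon `W_R` (symmetrization of `WRo`; for each pair at most one
order matches a case, and all values are nonnegative). -/
def WR (x y : ℝ) : ℝ := max (WRo x y) (WRo y x)

end
noncomputable section

/-- The limit function `g` from Proposition: `1` on `A' ∪ B'' ∪ C'`, `0.2` on `D`, else `0`. -/
def gLim : ℝ → ℝ := fun x =>
  if x ∈ pA' ∪ pB'' ∪ pC' then 1 else if x ∈ pD then 0.2 else 0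

/-- The functions `g_{i,δ}` from the Rademacher graphon construction
(coordinates inside parts are relative positions). -/
def gFam (i : ℕ) (δ : ℝ) : ℝ → ℝ := fun x =>
  if x ∈ pA then (if brk (9*x) = i then 1 else 0)
  else if x ∈ pA' then (if brk (9*x-1) ≠ i then 1 else 0)
  else if x ∈ pB' then (if 9*x-3 ≤ (1+δ) * (1/2:ℝ)^i then 1 else 0)
  else if x ∈ pB'' then (if 9*x-4 ≤ 1 - (1+δ) * (1/2:ℝ)^i then 1 else 0)
  else if x ∈ pC then (if Even ⌊(2:ℝ)^i * ((9*x-5)/2)⌋ then δ else 0)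
  else if x ∈ pC' then (if 9*x-7 ≤ 1-δ then 1 else 0)
  else if x ∈ pD then 0.2
  else 0

end


/-!
On each of the eight parts, `|g_{i,δ} - g|` coincides, off finitely many points, with the
indicator of a single subinterval: of relative length `2^{-i}` on `A` and `A'` (where
`[x/a] = i`), `(1+δ)2^{-i}` on `B'` and `B''`, `δ` on `C'`, and empty on `B` and `D`.
On `C` it is `δ` times the indicator of `{t | ⌊2^i t⌋ even}` in the relative coordinate `t`;
the indicator of `{u | ⌊u⌋ even}` is `2`-periodic with integral `1` over a period, and `2^i t`
runs through `2^{i-1}` periods, so `C` contributes `δ/9`.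
-/

open MeasureTheory Set Function
open scoped Interval

def HasIntervalIntegral (f : ℝ → ℝ) (a b v : ℝ) : Prop :=
  IntervalIntegrable f volume a b ∧ ∫ x in a..b, f x = v

theorem HasIntervalIntegral.add_adjacent {f : ℝ → ℝ} {a b c u v : ℝ}
    (hab : HasIntervalIntegral f a b u) (hbc : HasIntervalIntegral f b c v) :
    HasIntervalIntegral f a c (u + v) :=
  ⟨hab.1.trans hbc.1, by
    rw [← intervalIntegral.integral_add_adjacent_intervals hab.1 hbc.1, hab.2, hbc.2]⟩

theorem hasIntervalIntegral_zero {a b : ℝ} : HasIntervalIntegral (fun _ ↦ 0) a b 0 :=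
  ⟨intervalIntegrable_const, intervalIntegral.integral_zero⟩

theorem HasIntervalIntegral.congr_Ioo {f g : ℝ → ℝ} {a b v : ℝ} (hab : a ≤ b)
    (hg : HasIntervalIntegral g a b v) (hfg : ∀ᵐ x, x ∈ Ioo a b → f x = g x) :
    HasIntervalIntegral f a b v := by
  have hfg' : f =ᵐ[volume.restrict (Ι a b)] g := by
    rw [uIoc_of_le hab, ← Measure.restrict_congr_set Ioo_ae_eq_Ioc]
    exact (ae_restrict_iff' measurableSet_Ioo).2 hfg
  exact ⟨hg.1.congr_ae hfg'.symm, (intervalIntegral.integral_congr_ae_restrict hfg').trans hg.2⟩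

theorem hasIntervalIntegral_indicator_Ioo {a b l r : ℝ} (c : ℝ) (hal : a ≤ l) (hlr : l ≤ r)
    (hrb : r ≤ b) :
    HasIntervalIntegral ((Ioo l r).indicator fun _ ↦ c) a b ((r - l) * c) := by
  refine ⟨((integrableOn_const measure_Ioo_lt_top.ne).integrable_indicator measurableSet_Ioo)
    |>.intervalIntegrable, ?_⟩
  rw [intervalIntegral.integral_of_le (hal.trans (hlr.trans hrb)),
    integral_indicator_const _ measurableSet_Ioo, measureReal_restrict_apply measurableSet_Ioo,
    inter_eq_left.2 (Ioo_subset_Ioc_self.trans (Ioc_subset_Ioc hal hrb)),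
    Real.volume_real_Ioo_of_le hlr, smul_eq_mul]

theorem hasIntervalIntegral_of_eq_indicator {f : ℝ → ℝ} {a b l r v : ℝ} (c : ℝ) (hal : a ≤ l)
    (hlr : l ≤ r) (hrb : r ≤ b) (hv : (r - l) * c = v)
    (hf : ∀ x ∈ Ioo a b, x ≠ l → x ≠ r → f x = (Ioo l r).indicator (fun _ ↦ c) x) :
    HasIntervalIntegral f a b v := by
  refine hv ▸ (hasIntervalIntegral_indicator_Ioo c hal hlr hrb).congr_Ioo
    (hal.trans (hlr.trans hrb)) ?_
  filter_upwards [Measure.ae_ne volume l, Measure.ae_ne volume r] with x hl hr hx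
  exact hf x hx hl hr

noncomputable def evenFloorIndicator (u : ℝ) : ℝ := if Even ⌊u⌋ then 1 else 0

theorem evenFloorIndicator_periodic : Periodic evenFloorIndicator 2 := fun u ↦ by
  simp [evenFloorIndicator, Int.floor_add_ofNat]

theorem measurable_evenFloorIndicator : Measurable evenFloorIndicator :=
  Measurable.ite (Int.measurable_floor (MeasurableSet.of_discrete (s := {k : ℤ | Even k})))
    measurable_const measurable_const

theorem intervalIntegrable_evenFloorIndicator_comp {φ : ℝ → ℝ} (hφ : Measurable φ) (a b : ℝ) :
    IntervalIntegrable (fun x ↦ evenFloorIndicator (φ x)) volume a b := by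
  refine (intervalIntegrable_const (c := (1 : ℝ))).mono_fun'
    (measurable_evenFloorIndicator.comp hφ).aestronglyMeasurable (ae_of_all _ fun x ↦ ?_)
  dsimp only [evenFloorIndicator]; split_ifs <;> simp

theorem hasIntervalIntegral_evenFloorIndicator_zero_two :
    HasIntervalIntegral evenFloorIndicator 0 2 1 := by
  refine hasIntervalIntegral_of_eq_indicator (l := 0) (r := 1) 1 le_rfl zero_le_one one_le_two
    (by norm_num) fun x hx _ hx1 ↦ ?_
  obtain ⟨hx0, hx2⟩ := hx
  rcases hx1.lt_or_gt with hx1 | hx1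
  · rw [indicator_of_mem (mem_Ioo.2 ⟨hx0, hx1⟩), evenFloorIndicator,
      Int.floor_eq_zero_iff.2 ⟨hx0.le, hx1⟩, if_pos Even.zero]
  · rw [indicator_of_notMem fun h ↦ h.2.not_gt hx1, evenFloorIndicator,
      (Int.floor_eq_iff (z := 1)).2 ⟨by exact_mod_cast hx1.le, by push_cast; linarith⟩,
      if_neg Int.not_even_one]

theorem integral_evenFloorIndicator_zero_two_mul (m : ℕ) :
    ∫ u in 0..2 * m, evenFloorIndicator u = m := by
  have := evenFloorIndicator_periodic.intervalIntegral_add_zsmul_eq m 0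
    (intervalIntegrable_evenFloorIndicator_comp measurable_id)
  simp only [zero_add, zsmul_eq_mul, Int.cast_natCast] at this
  rw [mul_comm, this, hasIntervalIntegral_evenFloorIndicator_zero_two.2, mul_one]

theorem brk_eq_succ_iff (z : ℝ) (k : ℕ) :
    brk z = k + 1 ↔ 1 - (1/2:ℝ) ^ k ≤ z ∧ z < 1 - (1/2:ℝ) ^ (k + 1) := by
  rw [brk, Nat.sInf_upward_closed_eq_succ_iff]
  · simp only [mem_ofPred_eq, not_lt]
    constructor <;> rintro ⟨h₁, h₂⟩ <;> constructor <;> linarith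
  · intro m n hmn hm
    have : (1/2:ℝ) ^ n ≤ (1/2) ^ m := pow_le_pow_of_le_one (by norm_num) (by norm_num) hmn
    simp only [mem_ofPred_eq] at hm ⊢
    linarith

theorem brk_eq_iff {z : ℝ} {i : ℕ} (hi : 1 ≤ i) :
    brk z = i ↔ 1 - 2 * (1/2:ℝ) ^ i ≤ z ∧ z < 1 - (1/2:ℝ) ^ i := by
  obtain ⟨k, rfl⟩ := Nat.exists_eq_add_of_le' hi
  rw [brk_eq_succ_iff, pow_succ]
  ring_nf

section Pieces

variable {i : ℕ} {δ x : ℝ}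

theorem abs_gFam_sub_gLim_of_mem_pA (h : x ∈ pA) :
    |gFam i δ x - gLim x| = if brk (9 * x) = i then 1 else 0 := by
  grind [gFam, gLim, pA, pA', pB', pB'', pC, pC', pD]

theorem abs_gFam_sub_gLim_of_mem_pA' (h : x ∈ pA') :
    |gFam i δ x - gLim x| = if brk (9 * x - 1) = i then 1 else 0 := by
  grind [gFam, gLim, pA, pA', pB', pB'', pC, pC', pD]

theorem abs_gFam_sub_gLim_of_mem_pB (h : x ∈ pB) : |gFam i δ x - gLim x| = 0 := by
  grind [gFam, gLim, pA, pA', pB, pB', pB'', pC, pC', pD]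

theorem abs_gFam_sub_gLim_of_mem_pB' (h : x ∈ pB') :
    |gFam i δ x - gLim x| = if 9 * x - 3 ≤ (1 + δ) * (1/2:ℝ) ^ i then 1 else 0 := by
  grind [gFam, gLim, pA, pA', pB', pB'', pC, pC', pD]

theorem abs_gFam_sub_gLim_of_mem_pB'' (h : x ∈ pB'') :
    |gFam i δ x - gLim x| = if 1 - (1 + δ) * (1/2:ℝ) ^ i < 9 * x - 4 then 1 else 0 := by
  grind [gFam, gLim, pA, pA', pB', pB'', pC, pC', pD]

theorem abs_gFam_sub_gLim_of_mem_pC (hδ : 0 ≤ δ) (h : x ∈ pC) :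
    |gFam i δ x - gLim x| = if Even ⌊(2:ℝ) ^ i * ((9 * x - 5) / 2)⌋ then δ else 0 := by
  grind [gFam, gLim, pA, pA', pB', pB'', pC, pC', pD]

theorem abs_gFam_sub_gLim_of_mem_pC' (h : x ∈ pC') :
    |gFam i δ x - gLim x| = if 1 - δ < 9 * x - 7 then 1 else 0 := by
  grind [gFam, gLim, pA, pA', pB', pB'', pC, pC', pD]

theorem abs_gFam_sub_gLim_of_mem_pD (h : x ∈ pD) : |gFam i δ x - gLim x| = 0 := by
  grind [gFam, gLim, pA, pA', pB', pB'', pC, pC', pD]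

theorem hasIntervalIntegral_pA (hi : 1 ≤ i) :
    HasIntervalIntegral (fun x ↦ |gFam i δ x - gLim x|) 0 (1/9) ((1/2:ℝ) ^ i / 9) := by
  have hp₀ : 0 < (1/2:ℝ) ^ i := by positivity
  have hp₁ : (1/2:ℝ) ^ i ≤ 1/2 := pow_le_of_le_one (by norm_num) (by norm_num) (by omega)
  refine hasIntervalIntegral_of_eq_indicator (l := (1 - 2 * (1/2:ℝ) ^ i) / 9)
    (r := (1 - (1/2:ℝ) ^ i) / 9) 1 (by linarith) (by linarith) (by linarith) (by ring)
    fun x hx hl _ ↦ ?_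
  rw [abs_gFam_sub_gLim_of_mem_pA (Ioo_subset_Ico_self hx)]
  simp only [indicator_apply, mem_Ioo, brk_eq_iff hi]
  exact if_congr ⟨fun h ↦ ⟨lt_of_le_of_ne (by linarith) (Ne.symm hl), by linarith⟩,
    fun h ↦ ⟨by linarith, by linarith⟩⟩ rfl rfl

theorem hasIntervalIntegral_pA' (hi : 1 ≤ i) :
    HasIntervalIntegral (fun x ↦ |gFam i δ x - gLim x|) (1/9) (2/9) ((1/2:ℝ) ^ i / 9) := by
  have hp₀ : 0 < (1/2:ℝ) ^ i := by positivity
  have hp₁ : (1/2:ℝ) ^ i ≤ 1/2 := pow_le_of_le_one (by norm_num) (by norm_num) (by omega)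
  refine hasIntervalIntegral_of_eq_indicator (l := (2 - 2 * (1/2:ℝ) ^ i) / 9)
    (r := (2 - (1/2:ℝ) ^ i) / 9) 1 (by linarith) (by linarith) (by linarith) (by ring)
    fun x hx hl _ ↦ ?_
  rw [abs_gFam_sub_gLim_of_mem_pA' (Ioo_subset_Ico_self hx)]
  simp only [indicator_apply, mem_Ioo, brk_eq_iff hi]
  exact if_congr ⟨fun h ↦ ⟨lt_of_le_of_ne (by linarith) (Ne.symm hl), by linarith⟩,
    fun h ↦ ⟨by linarith, by linarith⟩⟩ rfl rfl

theorem hasIntervalIntegral_pB :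
    HasIntervalIntegral (fun x ↦ |gFam i δ x - gLim x|) (2/9) (3/9) 0 :=
  hasIntervalIntegral_zero.congr_Ioo (by norm_num)
    (ae_of_all _ fun _ hx ↦ abs_gFam_sub_gLim_of_mem_pB (Ioo_subset_Ico_self hx))

theorem hasIntervalIntegral_pB' (h₀ : 0 ≤ (1 + δ) * (1/2:ℝ) ^ i)
    (h₁ : (1 + δ) * (1/2:ℝ) ^ i ≤ 1) :
    HasIntervalIntegral (fun x ↦ |gFam i δ x - gLim x|) (3/9) (4/9)
      ((1 + δ) * (1/2:ℝ) ^ i / 9) := by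
  refine hasIntervalIntegral_of_eq_indicator (l := 3/9)
    (r := (3 + (1 + δ) * (1/2:ℝ) ^ i) / 9) 1 le_rfl (by linarith) (by linarith) (by ring)
    fun x hx _ hr ↦ ?_
  rw [abs_gFam_sub_gLim_of_mem_pB' (Ioo_subset_Ico_self hx)]
  simp only [indicator_apply, mem_Ioo]
  exact if_congr ⟨fun h ↦ ⟨hx.1, lt_of_le_of_ne (by linarith) hr⟩,
    fun h ↦ by linarith [h.2]⟩ rfl rfl

theorem hasIntervalIntegral_pB'' (h₀ : 0 ≤ (1 + δ) * (1/2:ℝ) ^ i)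
    (h₁ : (1 + δ) * (1/2:ℝ) ^ i ≤ 1) :
    HasIntervalIntegral (fun x ↦ |gFam i δ x - gLim x|) (4/9) (5/9)
      ((1 + δ) * (1/2:ℝ) ^ i / 9) := by
  refine hasIntervalIntegral_of_eq_indicator (l := (5 - (1 + δ) * (1/2:ℝ) ^ i) / 9)
    (r := 5/9) 1 (by linarith) (by linarith) le_rfl (by ring) fun x hx _ _ ↦ ?_
  rw [abs_gFam_sub_gLim_of_mem_pB'' (Ioo_subset_Ico_self hx)]
  simp only [indicator_apply, mem_Ioo]
  exact if_congr ⟨fun h ↦ ⟨by linarith, hx.2⟩, fun h ↦ by linarith [h.1]⟩ rfl rfl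

theorem hasIntervalIntegral_pC (hi : 1 ≤ i) (hδ : 0 ≤ δ) :
    HasIntervalIntegral (fun x ↦ |gFam i δ x - gLim x|) (5/9) (7/9) (δ / 9) := by
  obtain ⟨k, rfl⟩ := Nat.exists_eq_add_of_le' hi
  have hc : (9 * 2 ^ (k + 1) / 2 : ℝ) ≠ 0 := by positivity
  have hf (x : ℝ) : (if Even ⌊(2:ℝ) ^ (k + 1) * ((9 * x - 5) / 2)⌋ then δ else 0) =
      δ * evenFloorIndicator (9 * 2 ^ (k + 1) / 2 * x + -(5 * 2 ^ (k + 1) / 2)) := by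
    rw [evenFloorIndicator, mul_ite, mul_one, mul_zero]
    ring_nf
  refine HasIntervalIntegral.congr_Ioo (by norm_num) ⟨?_, ?_⟩ (ae_of_all _ fun x hx ↦
    (abs_gFam_sub_gLim_of_mem_pC hδ (Ioo_subset_Ico_self hx)).trans (hf x))
  · exact (intervalIntegrable_evenFloorIndicator_comp (by fun_prop) _ _).const_mul δ
  · have h₅ : 9 * 2 ^ (k + 1) / 2 * (5/9) + -(5 * 2 ^ (k + 1) / 2 : ℝ) = 0 := by ring
    have h₇ : 9 * 2 ^ (k + 1) / 2 * (7/9) + -(5 * 2 ^ (k + 1) / 2 : ℝ) = 2 * (2 ^ k : ℕ) := by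
      push_cast; ring
    rw [intervalIntegral.integral_const_mul, intervalIntegral.integral_comp_mul_add _ hc, h₅, h₇,
      integral_evenFloorIndicator_zero_two_mul, smul_eq_mul]
    push_cast
    field_simp
    ring

theorem hasIntervalIntegral_pC' (h₀ : 0 ≤ δ) (h₁ : δ ≤ 1) :
    HasIntervalIntegral (fun x ↦ |gFam i δ x - gLim x|) (7/9) (8/9) (δ / 9) := by
  refine hasIntervalIntegral_of_eq_indicator (l := (8 - δ) / 9) (r := 8/9) 1
    (by linarith) (by linarith) le_rfl (by ring) fun x hx _ _ ↦ ?_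
  rw [abs_gFam_sub_gLim_of_mem_pC' (Ioo_subset_Ico_self hx)]
  simp only [indicator_apply, mem_Ioo]
  exact if_congr ⟨fun h ↦ ⟨by linarith, hx.2⟩, fun h ↦ by linarith [h.1]⟩ rfl rfl

theorem hasIntervalIntegral_pD :
    HasIntervalIntegral (fun x ↦ |gFam i δ x - gLim x|) (8/9) 1 0 :=
  hasIntervalIntegral_zero.congr_Ioo (by norm_num)
    (ae_of_all _ fun _ hx ↦ abs_gFam_sub_gLim_of_mem_pD (Ioo_subset_Ico_self hx))

end Pieces

/-- `‖g_{i,δ} − g‖₁ = ((4 + 2δ)·2^{−i} + 2δ)/9` for `i ≥ 1` and `δ ∈ (0,1)`. -/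
theorem dist_gFam_gLim (i : ℕ) (hi : 1 ≤ i) (δ : ℝ) (hδ : δ ∈ Set.Ioo (0:ℝ) 1) :
    (∫ x in (0:ℝ)..1, |gFam i δ x - gLim x|) = ((4 + 2*δ) * (1/2:ℝ)^i + 2*δ) / 9 := by
  obtain ⟨hδ₀, hδ₁⟩ := hδ
  have hp : (1/2:ℝ) ^ i ≤ 1/2 := pow_le_of_le_one (by norm_num) (by norm_num) (by omega)
  have h₀ : 0 ≤ (1 + δ) * (1/2:ℝ) ^ i := by positivity
  have h₁ : (1 + δ) * (1/2:ℝ) ^ i ≤ 1 := by nlinarith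
  have := (((((((hasIntervalIntegral_pA (δ := δ) hi).add_adjacent
    (hasIntervalIntegral_pA' hi)).add_adjacent hasIntervalIntegral_pB).add_adjacent
    (hasIntervalIntegral_pB' h₀ h₁)).add_adjacent (hasIntervalIntegral_pB'' h₀ h₁)).add_adjacent
    (hasIntervalIntegral_pC hi hδ₀.le)).add_adjacent
    (hasIntervalIntegral_pC' hδ₀.le hδ₁.le)).add_adjacent hasIntervalIntegral_pD
  exact this.2.trans (by ring)
end

section
/- With g_{i,δ} as in the Rademacher graphon construction, for all i ≠ i' and δ, δ' ∈ (0,1), the L¹ distance satisfies ‖g_{i,δ} − g_{i',δ'}‖₁ > (δ + δ')/18. -/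
open MeasureTheory Set
open scoped Classical

/-!
On the part `C`, in the rescaled coordinate `t ∈ [0,1)`, `g_{i,δ}` is `δ (1 + rᵢ) / 2` with `rᵢ`
the `i`-th Rademacher function. For `j < k`, shifting `t` by `2⁻ʲ` flips `rⱼ` and fixes `rₖ`,
while shifting by `2⁻ᵏ` flips `rₖ`; summing `|g_{j,δ} - g_{k,δ'}|` over the four shifts
`t, t + 2⁻ʲ, t + 2⁻ᵏ, t + 2⁻ᵏ + 2⁻ʲ` therefore gives at least `δ + δ'`. All four shifted
integrals over `[0,1]` agree by `1`-periodicity, so `C` contributes at least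
`2/9 · (δ + δ')/4 = (δ + δ')/18`. The inequality is strict because on `B'` the thresholds
`(1 + δ) 2⁻ⁱ` and `(1 + δ') 2⁻ⁱ'` are distinct.
-/

lemma brk_le_iff {z : ℝ} {k : ℕ} : brk z ≤ k ↔ z + (1/2 : ℝ) ^ k < 1 ∨ 1 ≤ z := by
  constructor
  · intro h
    refine (lt_or_ge z 1).imp (fun hz => ?_) id
    obtain ⟨n, hn⟩ := exists_pow_lt_of_lt_one (sub_pos.2 hz) (by norm_num : (1/2 : ℝ) < 1)
    have hmem : z + (1/2 : ℝ) ^ brk z < 1 :=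
      Nat.sInf_mem (s := {k : ℕ | z + (1/2 : ℝ) ^ k < 1})
        ⟨n, show z + (1/2 : ℝ) ^ n < 1 by linarith⟩
    linarith [pow_le_pow_of_le_one (by norm_num : (0:ℝ) ≤ 1/2) (by norm_num) h]
  · rintro (h | h)
    · exact Nat.sInf_le h
    · have hempty : {k : ℕ | z + (1/2 : ℝ) ^ k < 1} = ∅ :=
        eq_empty_of_forall_notMem fun k (hk : z + (1/2 : ℝ) ^ k < 1) => by
          have : (0:ℝ) < (1/2) ^ k := by positivity
          linarith
      rw [brk, hempty, Nat.sInf_empty]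
      exact k.zero_le

lemma measurable_brk : Measurable brk := by
  refine measurable_of_Iic fun k => ?_
  have : brk ⁻¹' Iic k = Iio (1 - (1/2 : ℝ) ^ k) ∪ Ici 1 := by
    ext z
    simp only [mem_preimage, mem_Iic, brk_le_iff, mem_union, mem_Iio, mem_Ici]
    constructor <;> rintro (h | h) <;> first | (left; linarith) | (right; exact h)
  rw [this]
  exact measurableSet_Iio.union measurableSet_Ici

lemma measurable_gFam (i : ℕ) (δ : ℝ) : Measurable (gFam i δ) := by
  have hA : Measurable fun x : ℝ => brk (9*x) := measurable_brk.comp (by fun_prop)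
  have hA' : Measurable fun x : ℝ => brk (9*x - 1) := measurable_brk.comp (by fun_prop)
  unfold gFam
  repeat' apply Measurable.ite
  all_goals first
    | exact measurable_const
    | exact measurableSet_Ico
    | exact measurableSet_le (by fun_prop) measurable_const
    | exact hA (measurableSet_singleton i)
    | exact (hA' (measurableSet_singleton i)).compl
    | exact (Measurable.floor (by fun_prop)) (MeasurableSet.of_discrete (s := {n : ℤ | Even n}))

lemma abs_gFam_le (i : ℕ) (δ x : ℝ) : |gFam i δ x| ≤ max 1 |δ| := by
  unfold gFam
  split_ifs <;> norm_num

lemma intervalIntegrable_gFam (i : ℕ) (δ a b : ℝ) : IntervalIntegrable (gFam i δ) volume a b :=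
  intervalIntegrable_iff.2 <| IntegrableOn.of_bound measure_Ioc_lt_top
    (measurable_gFam i δ).aestronglyMeasurable _ (.of_forall fun x => abs_gFam_le i δ x)

/-- `δ (1 + rᵢ) / 2`, where `rᵢ t = (-1) ^ ⌊2 ^ i t⌋` is the `i`-th Rademacher function. -/
noncomputable def rademacherStep (i : ℕ) (δ t : ℝ) : ℝ := if Even ⌊(2:ℝ) ^ i * t⌋ then δ else 0

lemma measurable_rademacherStep (i : ℕ) (δ : ℝ) : Measurable (rademacherStep i δ) :=
  Measurable.ite
    ((Measurable.floor (by fun_prop)) (MeasurableSet.of_discrete (s := {n : ℤ | Even n})))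
    measurable_const measurable_const

lemma intervalIntegrable_rademacherStep (i : ℕ) (δ a b : ℝ) :
    IntervalIntegrable (rademacherStep i δ) volume a b :=
  intervalIntegrable_iff.2 <| IntegrableOn.of_bound measure_Ioc_lt_top
    (measurable_rademacherStep i δ).aestronglyMeasurable |δ|
    (.of_forall fun t => by unfold rademacherStep; split_ifs <;> simp)

lemma rademacherStep_add_inv_two_pow (i : ℕ) (δ t : ℝ) :
    rademacherStep i δ (t + (2 ^ i)⁻¹) = δ - rademacherStep i δ t := by
  have : (2:ℝ) ^ i * (t + (2 ^ i)⁻¹) = 2 ^ i * t + (1 : ℤ) := by field_simp; push_cast; ring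
  simp only [rademacherStep, this, Int.floor_add_intCast, Int.even_add_one]
  split_ifs <;> simp_all

lemma rademacherStep_add_inv_two_pow_of_lt {i k : ℕ} (hik : i < k) (δ t : ℝ) :
    rademacherStep k δ (t + (2 ^ i)⁻¹) = rademacherStep k δ t := by
  have : (2:ℝ) ^ k * (t + (2 ^ i)⁻¹) = 2 ^ k * t + ((2 ^ (k - i) : ℕ) : ℤ) := by
    rw [mul_add, Nat.cast_pow, Nat.cast_ofNat, Int.cast_pow, Int.cast_ofNat,
      ← pow_sub₀ (2:ℝ) two_ne_zero hik.le]
  have heven : Even (2 ^ (k - i) : ℕ) := (Nat.even_pow' (by omega)).2 even_two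
  simp only [rademacherStep, this, Int.floor_add_intCast, Int.even_add, Int.even_coe_nat, heven,
    iff_true]

lemma periodic_rademacherStep {k : ℕ} (hk : 0 < k) (δ : ℝ) :
    Function.Periodic (rademacherStep k δ) 1 := fun t => by
  simpa using rademacherStep_add_inv_two_pow_of_lt hk δ t

lemma le_integral_abs_rademacherStep_sub {j k : ℕ} (hj : 0 < j) (hjk : j < k) {δ δ' : ℝ}
    (hδ : 0 ≤ δ) (hδ' : 0 ≤ δ') :
    (δ + δ') / 4 ≤ ∫ t in (0:ℝ)..1, |rademacherStep j δ t - rademacherStep k δ' t| := by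
  set D := fun t => |rademacherStep j δ t - rademacherStep k δ' t|
  have hfour : ∀ t, δ + δ' ≤ D (t + 0) + D (t + (2 ^ j)⁻¹) + D (t + (2 ^ k)⁻¹)
      + D (t + ((2 ^ k)⁻¹ + (2 ^ j)⁻¹)) := fun t => by
    simp only [D, add_zero, ← add_assoc, rademacherStep_add_inv_two_pow,
      rademacherStep_add_inv_two_pow_of_lt hjk]
    unfold rademacherStep
    split_ifs <;> simp only [sub_zero, zero_sub, sub_self, abs_neg, abs_zero, abs_of_nonneg hδ,
      abs_of_nonneg hδ'] <;> linarith [abs_nonneg (δ - δ'), le_abs_self (δ - δ')]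
  have hper : Function.Periodic D 1 := fun t => by
    simp only [D, periodic_rademacherStep hj δ t, periodic_rademacherStep (hj.trans hjk) δ' t]
  have hD : ∀ a b, IntervalIntegrable D volume a b := fun a b =>
    ((intervalIntegrable_rademacherStep j δ a b).sub
      (intervalIntegrable_rademacherStep k δ' a b)).abs
  have hint : ∀ c, IntervalIntegrable (fun t => D (t + c)) volume 0 1 := fun c => by
    simpa using (hD c (1 + c)).comp_add_right c
  clear_value D
  have hshift : ∀ c, ∫ t in (0:ℝ)..1, D (t + c) = ∫ t in (0:ℝ)..1, D t := fun c => by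
    rw [intervalIntegral.integral_comp_add_right, zero_add, add_comm 1 c,
      hper.intervalIntegral_add_eq c 0, zero_add]
  have hsum : ∫ t in (0:ℝ)..1,
      (D (t + 0) + D (t + (2 ^ j)⁻¹) + D (t + (2 ^ k)⁻¹) + D (t + ((2 ^ k)⁻¹ + (2 ^ j)⁻¹)))
      = 4 * ∫ t in (0:ℝ)..1, D t := by
    rw [intervalIntegral.integral_add (((hint 0).add (hint _)).add (hint _)) (hint _),
      intervalIntegral.integral_add ((hint 0).add (hint _)) (hint _),
      intervalIntegral.integral_add (hint 0) (hint _), hshift, hshift, hshift, hshift]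
    ring
  have hmono := intervalIntegral.integral_mono_on zero_le_one intervalIntegrable_const
    ((((hint 0).add (hint _)).add (hint _)).add (hint _)) fun t _ => hfour t
  rw [hsum, intervalIntegral.integral_const, sub_zero, one_smul] at hmono
  linarith

section
variable {x : ℝ} (i : ℕ) (δ : ℝ)

lemma gFam_of_mem_pB' (hx : x ∈ pB') :
    gFam i δ x = if 9 * x - 3 ≤ (1 + δ) * (1/2 : ℝ) ^ i then 1 else 0 := by
  obtain ⟨h1, h2⟩ := hx
  have hA : x ∉ pA := fun h => by linarith [h.2]
  have hA' : x ∉ pA' := fun h => by linarith [h.2]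
  simp only [gFam, if_neg hA, if_neg hA', if_pos (show x ∈ pB' from ⟨h1, h2⟩)]

lemma gFam_of_mem_pC (hx : x ∈ pC) : gFam i δ x = rademacherStep i δ ((9 * x - 5) / 2) := by
  obtain ⟨h1, h2⟩ := hx
  have hA : x ∉ pA := fun h => by linarith [h.2]
  have hA' : x ∉ pA' := fun h => by linarith [h.2]
  have hB' : x ∉ pB' := fun h => by linarith [h.2]
  have hB'' : x ∉ pB'' := fun h => by linarith [h.2]
  simp only [gFam, if_neg hA, if_neg hA', if_neg hB', if_neg hB'',
    if_pos (show x ∈ pC from ⟨h1, h2⟩), rademacherStep]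

end

lemma integral_abs_gFam_sub_pC (i i' : ℕ) (δ δ' : ℝ) :
    ∫ x in (5/9 : ℝ)..(7/9), |gFam i δ x - gFam i' δ' x|
      = 2 / 9 * ∫ t in (0:ℝ)..1, |rademacherStep i δ t - rademacherStep i' δ' t| := by
  have hcongr : ∫ x in (5/9 : ℝ)..(7/9), |gFam i δ x - gFam i' δ' x|
      = ∫ x in (5/9 : ℝ)..(7/9),
        |rademacherStep i δ (9/2 * x - 5/2) - rademacherStep i' δ' (9/2 * x - 5/2)| := by
    refine intervalIntegral.integral_congr_ae ?_
    filter_upwards [Measure.ae_ne volume (7/9)] with x hx7 hx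
    rw [uIoc_of_le (by norm_num)] at hx
    have hC : x ∈ pC := ⟨hx.1.le, lt_of_le_of_ne hx.2 hx7⟩
    rw [gFam_of_mem_pC i δ hC, gFam_of_mem_pC i' δ' hC]
    ring_nf
  rw [hcongr, intervalIntegral.integral_comp_mul_sub (fun t =>
    |rademacherStep i δ t - rademacherStep i' δ' t|) (by norm_num : (9/2 : ℝ) ≠ 0)]
  norm_num

lemma integral_abs_gFam_sub_pB'_pos {i i' : ℕ} (hi : 0 < i) (hii' : i < i') {δ δ' : ℝ}
    (hδ : 0 ≤ δ) (hδ'₀ : 0 ≤ δ') (hδ'₁ : δ' < 1) :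
    0 < ∫ x in (3/9 : ℝ)..(4/9), |gFam i δ x - gFam i' δ' x| := by
  set c : ℝ := (1/2) ^ i
  set b : ℝ := (1 + δ') * (1/2) ^ i'
  have hc : c ≤ 1/2 := pow_le_of_le_one (by norm_num) (by norm_num) hi.ne'
  have hb0 : 0 ≤ b := by positivity
  have hbc : b < c := calc
    b ≤ (1 + δ') * (1/2) ^ (i + 1) :=
      mul_le_mul_of_nonneg_left (pow_le_pow_of_le_one (by norm_num) (by norm_num) hii')
        (by linarith)
    _ < c := by rw [pow_succ]; nlinarith [show (0:ℝ) < c by positivity]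
  have hone : ∀ x ∈ uIoc ((3 + b) / 9) ((3 + c) / 9), |gFam i δ x - gFam i' δ' x| = 1 := by
    intro x hx
    rw [uIoc_of_le (by linarith)] at hx
    have hB' : x ∈ pB' := ⟨by linarith [hx.1], by linarith [hx.2]⟩
    rw [gFam_of_mem_pB' i δ hB', gFam_of_mem_pB' i' δ' hB',
      if_pos (by nlinarith [hx.2, show (0:ℝ) < c by positivity]), if_neg (by linarith [hx.1])]
    norm_num
  calc (0 : ℝ) < (c - b) / 9 := by linarith
    _ = ∫ x in ((3 + b) / 9)..((3 + c) / 9), |gFam i δ x - gFam i' δ' x| := by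
      rw [intervalIntegral.integral_congr_ae (.of_forall hone)]
      simp
      ring
    _ ≤ ∫ x in (3/9 : ℝ)..(4/9), |gFam i δ x - gFam i' δ' x| :=
      intervalIntegral.integral_mono_interval (by linarith) (by linarith) (by linarith)
        (.of_forall fun _ => abs_nonneg _)
        ((intervalIntegrable_gFam i δ _ _).sub (intervalIntegrable_gFam i' δ' _ _)).abs

/-- For `i ≠ i'` (both `≥ 1`) and `δ, δ' ∈ (0,1)`,
`‖g_{i,δ} − g_{i',δ'}‖₁ > (δ + δ')/18`. -/
theorem dist_gFam_gFam (i i' : ℕ) (hi : 1 ≤ i) (hi' : 1 ≤ i') (hne : i ≠ i')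
    (δ δ' : ℝ) (hδ : δ ∈ Set.Ioo (0:ℝ) 1) (hδ' : δ' ∈ Set.Ioo (0:ℝ) 1) :
    (δ + δ') / 18 < ∫ x in (0:ℝ)..1, |gFam i δ x - gFam i' δ' x| := by
  wlog hlt : i < i' generalizing i i' δ δ'
  · simpa only [abs_sub_comm, add_comm δ'] using
      this i' i hi' hi hne.symm δ' δ hδ' hδ (by omega)
  have hB' := integral_abs_gFam_sub_pB'_pos hi hlt hδ.1.le hδ'.1.le hδ'.2
  have hC := integral_abs_gFam_sub_pC i i' δ δ'
  have hC' := le_integral_abs_rademacherStep_sub hi hlt hδ.1.le hδ'.1.le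
  set f := fun x => |gFam i δ x - gFam i' δ' x|
  have hf : ∀ a b, IntervalIntegrable f volume a b := fun a b =>
    ((intervalIntegrable_gFam i δ a b).sub (intervalIntegrable_gFam i' δ' a b)).abs
  have hf₀ : ∀ s, 0 ≤ᵐ[volume.restrict s] f := fun _ => .of_forall fun _ => abs_nonneg _
  calc (δ + δ') / 18
      < (∫ x in (3/9 : ℝ)..(4/9), f x) + ∫ x in (5/9 : ℝ)..(7/9), f x := by linarith
    _ ≤ (∫ x in (3/9 : ℝ)..(5/9), f x) + ∫ x in (5/9 : ℝ)..(7/9), f x := by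
      gcongr
      exact intervalIntegral.integral_mono_interval le_rfl (by norm_num) (by norm_num)
        (hf₀ _) (hf _ _)
    _ = ∫ x in (3/9 : ℝ)..(7/9), f x :=
      intervalIntegral.integral_add_adjacent_intervals (hf _ _) (hf _ _)
    _ ≤ ∫ x in (0 : ℝ)..1, f x :=
      intervalIntegral.integral_mono_interval (by norm_num) (by norm_num) (by norm_num)
        (hf₀ _) (hf _ _)
end

section
/- The topological space T(W_R) of typical vertices of the Rademacher graphon W_R is not locally compact; in particular, it is not compact. -/
open MeasureTheory Set
open scoped Classical

noncomputable section

/-- Lebesgue measure restricted to `[0,1]`. -/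
def μ01 : Measure ℝ := volume.restrict (Set.Icc 0 1)

/-- The space `T(W)` of typical vertices of a graphon `W`, as a subset of `L¹[0,1]`:
those `f ∈ L¹[0,1]` such that every open neighborhood `U` of `f` satisfies
`|{x ∈ [0,1] : f^W_x ∈ U}| > 0`, where `f^W_x = W(x,·)`. -/
def Tspace (W : ℝ → ℝ → ℝ) : Set (Lp ℝ 1 μ01) :=
  {f | ∀ U : Set (Lp ℝ 1 μ01), IsOpen U → f ∈ U →
    0 < volume {x | x ∈ Set.Icc (0:ℝ) 1 ∧
      ∃ g ∈ U, ∀ᵐ y ∂μ01, g y = W x y}}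

end

/-!
For a vertex `x = (1 + t)/9` of `A'` whose coordinate `t` lies in the dyadic block
`[1 - 2^{1-i}, 1 - 2^{-i})`, the neighbourhood function `W_R(x, ·)` is an explicit step function
whose restriction to `C` is `c · 1{r_i = 1}` for the Rademacher function `r_i` and a weight
`c = 2^i (1 - 2^{-i} - t) ∈ (0, 1]`. Choosing `c ≈ δ` and `i` large puts `W_R(x, ·)` within
`O(2^{-i} + δ)` of a fixed step function `g` in `L¹`, while two such functions for `i ≠ j` differ
by at least `δ` on the half of `C` where `r_i ≠ r_j`. Almost every vertex is typical and `T(W_R)`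
is closed, so `g ∈ T(W_R)` and every neighbourhood of `g` in `T(W_R)` contains an infinite
`δ/9`-separated set of typical neighbourhood functions: no neighbourhood of `g` is compact.
-/

open scoped ENNReal symmDiff

noncomputable section

namespace RademacherGraphon

instance : IsFiniteMeasure μ01 := by unfold μ01; infer_instance

theorem not_locallyCompactSpace_of_separated {X : Type*} [PseudoMetricSpace X] (p : X)
    (h : ∀ r > 0, ∃ ε > 0, ∃ u : ℕ → X, (∀ n, dist (u n) p < r) ∧
      ∀ m n, m < n → ε ≤ dist (u m) (u n)) :
    ¬ LocallyCompactSpace X := by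
  intro _
  obtain ⟨K, hK, hKp⟩ := exists_compact_mem_nhds p
  obtain ⟨r, hr, hball⟩ := Metric.mem_nhds_iff.1 hKp
  obtain ⟨ε, hε, u, hu, hsep⟩ := h r hr
  obtain ⟨a, -, φ, hφ, hlim⟩ := hK.tendsto_subseq fun n => hball (hu n)
  obtain ⟨N, hN⟩ := Metric.tendsto_atTop.1 hlim (ε / 2) (half_pos hε)
  have hfar := hsep _ _ (hφ (lt_add_one N))
  have h₁ : dist (u (φ N)) a < ε / 2 := hN N le_rfl
  have h₂ : dist (u (φ (N + 1))) a < ε / 2 := hN (N + 1) (Nat.le_succ N)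
  linarith [dist_triangle_right (u (φ N)) (u (φ (N + 1))) a]

theorem isClosed_Tspace (W : ℝ → ℝ → ℝ) : IsClosed (Tspace W) := by
  refine closure_subset_iff_isClosed.1 fun f hf U hU hfU => ?_
  obtain ⟨g, hgU, hg⟩ := mem_closure_iff.1 hf U hU hfU
  exact hg U hU hgU

/-- `L¹` is second countable, so the atypical vertices are covered by countably many null sets
`{x | W(x, ·) ∈ U}` with `U` a basic open set. -/
theorem ae_mem_Tspace (W : ℝ → ℝ → ℝ) :
    ∀ᵐ x, x ∈ Icc (0 : ℝ) 1 → ∀ g : Lp ℝ 1 μ01, (∀ᵐ y ∂μ01, g y = W x y) → g ∈ Tspace W := by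
  have : Fact ((1 : ℝ≥0∞) ≠ ⊤) := ⟨ENNReal.one_ne_top⟩
  set S : Set (Lp ℝ 1 μ01) → Set ℝ :=
    fun U => {x | x ∈ Icc (0 : ℝ) 1 ∧ ∃ g ∈ U, ∀ᵐ y ∂μ01, g y = W x y}
  obtain ⟨B, hBc, -, hB⟩ := TopologicalSpace.exists_countable_basis (Lp ℝ 1 μ01)
  have hnull : volume (⋃ U ∈ {U ∈ B | volume (S U) = 0}, S U) = 0 :=
    (measure_biUnion_null_iff (hBc.mono (sep_subset _ _))).2 fun U hU => hU.2
  refine ae_iff.2 (measure_mono_null (fun x hx => ?_) hnull)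
  simp only [Classical.not_imp, not_forall] at hx
  obtain ⟨hx01, g, hgx, hgT⟩ := hx
  simp only [Tspace, mem_ofPred_eq, not_forall, not_lt, nonpos_iff_eq_zero, exists_prop] at hgT
  obtain ⟨U, hU, hgU, hSU⟩ := hgT
  obtain ⟨V, hVB, hgV, hVU⟩ := hB.exists_subset_of_mem_open hgU hU
  refine mem_iUnion₂.2 ⟨V, ⟨hVB, measure_mono_null ?_ hSU⟩, hx01, g, hgV, hgx⟩
  exact fun z ⟨hz, g', hg', hg'z⟩ => ⟨hz, g', hVU hg', hg'z⟩

theorem volume_eq_of_mapsTo_add_sub {A B : Set ℝ} (h : ℝ) (hAB : MapsTo (· + h) A B)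
    (hBA : MapsTo (· - h) B A) : volume A = volume B := by
  refine le_antisymm ?_ ?_
  · calc volume A ≤ volume ((· + h) ⁻¹' B) := measure_mono hAB
      _ = volume B := measure_preimage_add_right _ _ _
  · calc volume B ≤ volume ((· + -h) ⁻¹' A) := measure_mono fun s hs => by
          simpa [← sub_eq_add_neg] using hBA hs
      _ = volume A := measure_preimage_add_right _ _ _

/-- `{r_i = 1}` for the Rademacher function `r_i(s) = (-1)^⌊2^i s⌋`. -/
def radSet (i : ℕ) : Set ℝ := {s | Even ⌊s * 2 ^ i⌋}

theorem measurableSet_radSet (i : ℕ) : MeasurableSet (radSet i) :=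
  (measurable_id.mul_const _).floor (MeasurableSet.of_discrete (s := {n : ℤ | Even n}))

theorem add_one_lt_of_even_floor {u : ℝ} {n : ℤ} (hu : Even ⌊u⌋) (hn : Even n) (h : u < n) :
    u + 1 < n := by
  have h₁ : ⌊u⌋ < n := Int.floor_lt.2 h
  have h₂ : ⌊u⌋ + 2 ≤ n := by
    obtain ⟨a, ha⟩ := hu
    obtain ⟨b, hb⟩ := hn
    omega
  have h₃ : ((⌊u⌋ + 2 : ℤ) : ℝ) ≤ n := by exact_mod_cast h₂
  push_cast at h₃
  linarith [Int.lt_floor_add_one u]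

theorem floor_add_half_pow_mul_two_pow {j : ℕ} (s : ℝ) :
    ⌊(s + (1 / 2) ^ j) * 2 ^ j⌋ = ⌊s * 2 ^ j⌋ + 1 := by
  rw [add_mul, ← mul_pow, show (1 / 2 : ℝ) * 2 = 1 by norm_num, one_pow, Int.floor_add_one]

/-- From a point where `⌊2^j s⌋` is even, a step of `2^{-j}` stays in the same dyadic interval of
length `2^{1-j}`, hence in the same dyadic interval of length `2^{-i}`. -/
theorem floor_add_half_pow_mul_two_pow_of_lt {i j : ℕ} (hij : i < j) {s : ℝ}
    (hs : Even ⌊s * 2 ^ j⌋) : ⌊(s + (1 / 2) ^ j) * 2 ^ i⌋ = ⌊s * 2 ^ i⌋ := by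
  obtain ⟨d, rfl⟩ := Nat.exists_eq_add_of_lt hij
  have hpow : (2 : ℝ) ^ (i + d + 1) = 2 ^ i * 2 ^ (d + 1) := by rw [← pow_add, add_assoc]
  have hhalf : (1 / 2 : ℝ) ^ (i + d + 1) * 2 ^ (i + d + 1) = 1 := by rw [← mul_pow]; norm_num
  have hlt := add_one_lt_of_even_floor hs (n := (⌊s * 2 ^ i⌋ + 1) * 2 ^ (d + 1))
    ((Int.even_pow.2 ⟨even_two, d.succ_ne_zero⟩).mul_left _)
    (by push_cast; rw [hpow, ← mul_assoc]; gcongr; exact Int.lt_floor_add_one _)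
  push_cast at hlt
  rw [Int.floor_eq_iff]
  constructor
  · have : 0 ≤ (1 / 2 : ℝ) ^ (i + d + 1) * 2 ^ i := by positivity
    linarith [Int.floor_le (s * 2 ^ i)]
  · rw [← mul_lt_mul_iff_of_pos_right (by positivity : (0 : ℝ) < 2 ^ (d + 1))]
    calc (s + (1 / 2) ^ (i + d + 1)) * 2 ^ i * 2 ^ (d + 1)
        = s * 2 ^ (i + d + 1) + (1 / 2) ^ (i + d + 1) * 2 ^ (i + d + 1) := by rw [hpow]; ring
      _ < _ := by rw [hhalf]; exact hlt

theorem add_half_pow_mem_of_mem_radSet {i j : ℕ} (hij : i < j) {s : ℝ}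
    (hs : s ∈ Ico 0 1 ∩ radSet j) :
    s + (1 / 2) ^ j ∈ Ico 0 1 \ radSet j ∧
      (s + (1 / 2) ^ j ∈ radSet i ∆ radSet j ↔ s ∉ radSet i ∆ radSet j) := by
  obtain ⟨⟨hs₀, hs₁⟩, hsj⟩ := hs
  have hodd : s + (1 / 2) ^ j ∉ radSet j := by
    simp only [radSet, mem_ofPred_eq, floor_add_half_pow_mul_two_pow, Int.even_add_one, not_not]
    exact hsj
  refine ⟨⟨⟨by positivity, ?_⟩, hodd⟩, ?_⟩
  · have h2 : (0 : ℝ) < 2 ^ j := by positivity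
    have hlt := add_one_lt_of_even_floor hsj (n := 2 ^ j) (Int.even_pow.2 ⟨even_two, by omega⟩)
      (by push_cast; nlinarith)
    have hh : (1 / 2 : ℝ) ^ j * 2 ^ j = 1 := by rw [← mul_pow]; norm_num
    push_cast at hlt
    rw [← mul_lt_mul_iff_of_pos_right h2]
    linarith
  · have hi : s + (1 / 2) ^ j ∈ radSet i ↔ s ∈ radSet i := by
      simp only [radSet, mem_ofPred_eq, floor_add_half_pow_mul_two_pow_of_lt hij hsj]
    simp only [mem_symmDiff, hi]
    tauto

theorem sub_half_pow_mem_of_notMem_radSet {i j : ℕ} (hij : i < j) {s : ℝ}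
    (hs : s ∈ Ico 0 1 \ radSet j) :
    s - (1 / 2) ^ j ∈ Ico 0 1 ∩ radSet j ∧
      (s - (1 / 2) ^ j ∈ radSet i ∆ radSet j ↔ s ∉ radSet i ∆ radSet j) := by
  obtain ⟨⟨hs0, hs1⟩, hsj⟩ := hs
  have hfl := floor_add_half_pow_mul_two_pow (j := j) (s - (1 / 2) ^ j)
  rw [sub_add_cancel] at hfl
  have heven : s - (1 / 2) ^ j ∈ radSet j := by
    have : ¬ Even (⌊(s - (1 / 2) ^ j) * 2 ^ j⌋ + 1) := by rw [← hfl]; exact hsj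
    simpa [radSet, Int.even_add_one] using this
  have hmem : s - (1 / 2) ^ j ∈ Ico 0 1 := by
    refine ⟨?_, by linarith [pow_pos (one_half_pos (α := ℝ)) j]⟩
    have hne : ⌊s * 2 ^ j⌋ ≠ 0 := fun h => hsj (by simp [radSet, h])
    have hpos : (1 : ℤ) ≤ ⌊s * 2 ^ j⌋ := by
      have : 0 ≤ ⌊s * 2 ^ j⌋ := Int.floor_nonneg.2 (by positivity)
      omega
    have h1 : (1 : ℝ) ≤ s * 2 ^ j := by exact_mod_cast Int.le_floor.1 hpos
    have hh : (1 / 2 : ℝ) ^ j * 2 ^ j = 1 := by rw [← mul_pow]; norm_num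
    have h2 : (0 : ℝ) < 2 ^ j := by positivity
    rw [← mul_le_mul_iff_of_pos_right h2]
    nlinarith
  have key := (add_half_pow_mem_of_mem_radSet hij ⟨hmem, heven⟩).2
  rw [sub_add_cancel] at key
  exact ⟨⟨hmem, heven⟩, fun h hs => key.1 hs h, fun h => by_contra fun h' => h (key.2 h')⟩

/-- The shift by `2^{-j}` exchanges `{r_j = 1}` and `{r_j = -1}` inside `[0,1)` and preserves `r_i`,
so it exchanges the sets where `r_i` and `r_j` agree and disagree. -/
theorem volume_Ico_inter_radSet_symmDiff {i j : ℕ} (hij : i < j) :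
    volume (Ico 0 1 ∩ radSet i ∆ radSet j) = 1 / 2 := by
  set I := Ico (0 : ℝ) 1
  set E := radSet j
  set D := radSet i ∆ radSet j
  have hE : MeasurableSet E := measurableSet_radSet j
  have hD : MeasurableSet D := (measurableSet_radSet i).symmDiff hE
  have up := fun {s} (hs : s ∈ I ∩ E) => add_half_pow_mem_of_mem_radSet hij hs
  have down := fun {s} (hs : s ∈ I \ E) => sub_half_pow_mem_of_notMem_radSet hij hs
  have h₁ : volume (I ∩ E ∩ D) = volume ((I \ E) \ D) :=
    volume_eq_of_mapsTo_add_sub _ (fun s hs => ⟨(up hs.1).1, fun h => (up hs.1).2.1 h hs.2⟩)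
      fun s hs => ⟨(down hs.1).1, (down hs.1).2.2 hs.2⟩
  have h₂ : volume ((I ∩ E) \ D) = volume ((I \ E) ∩ D) :=
    volume_eq_of_mapsTo_add_sub _ (fun s hs => ⟨(up hs.1).1, (up hs.1).2.2 hs.2⟩)
      fun s hs => ⟨(down hs.1).1, fun h => (down hs.1).2.1 h hs.2⟩
  have hsplit : volume (I ∩ D) = volume (I \ D) := by
    rw [← measure_inter_add_sdiff (I ∩ D) hE, ← measure_inter_add_sdiff (I \ D) hE,
      inter_right_comm, h₁, inter_sdiff_right_comm, ← h₂, add_comm]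
    congr 2 <;> ext <;> simp only [mem_inter_iff, Set.mem_sdiff] <;> tauto
  have htotal := measure_inter_add_sdiff (μ := volume) I hD
  rw [Real.volume_Ico, sub_zero, ENNReal.ofReal_one, ← hsplit, ← two_mul] at htotal
  rw [ENNReal.eq_div_iff two_ne_zero ENNReal.ofNat_ne_top, htotal]

def block (i : ℕ) : Set ℝ := Ico (1 - 2 * (1 / 2) ^ i) (1 - (1 / 2) ^ i)

theorem block_subset_Ico {i : ℕ} (hi : 1 ≤ i) : block i ⊆ Ico 0 1 := by
  intro t ⟨h₁, h₂⟩
  have : (1 / 2 : ℝ) ^ i ≤ 1 / 2 := pow_le_of_le_one (by norm_num) (by norm_num) (by omega)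
  exact ⟨by linarith, by linarith [pow_pos (one_half_pos (α := ℝ)) i]⟩

theorem brk_eq_of_mem_block {i : ℕ} (hi : 1 ≤ i) {t : ℝ} (ht : t ∈ block i) : brk t = i := by
  obtain ⟨h₁, h₂⟩ := ht
  have hmem : i ∈ {k : ℕ | t + (1 / 2 : ℝ) ^ k < 1} := by
    simp only [mem_ofPred_eq]; linarith
  refine le_antisymm (Nat.sInf_le hmem) (le_csInf ⟨i, hmem⟩ fun k (hk : t + _ < 1) => ?_)
  by_contra! hki
  have : (1 / 2 : ℝ) ^ (i - 1) ≤ (1 / 2) ^ k :=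
    pow_le_pow_of_le_one (by norm_num) (by norm_num) (by omega)
  have : (1 / 2 : ℝ) ^ i * 2 = (1 / 2) ^ (i - 1) := by
    rw [← pow_sub_one_mul (by omega : i ≠ 0)]; ring
  linarith

theorem one_le_brk_and_mem_block {t : ℝ} (ht : t ∈ Ico 0 1) : 1 ≤ brk t ∧ t ∈ block (brk t) := by
  obtain ⟨h₀, h₁⟩ := ht
  have hne : {k : ℕ | t + (1 / 2 : ℝ) ^ k < 1}.Nonempty := by
    obtain ⟨n, hn⟩ := exists_pow_lt_of_lt_one (sub_pos.2 h₁) one_half_lt_one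
    exact ⟨n, by simp only [mem_ofPred_eq]; linarith⟩
  have hmem : t + (1 / 2 : ℝ) ^ brk t < 1 := Nat.sInf_mem hne
  have hpos : 1 ≤ brk t := by
    by_contra! h
    rw [Nat.lt_one_iff.1 h, pow_zero] at hmem
    linarith
  refine ⟨hpos, ?_, by linarith⟩
  by_contra! hlt
  have hprev : t + (1 / 2 : ℝ) ^ (brk t - 1) < 1 := by
    have : (1 / 2 : ℝ) ^ brk t * 2 = (1 / 2) ^ (brk t - 1) := by
      rw [← pow_sub_one_mul (by omega : brk t ≠ 0)]; ring
    linarith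
  have : brk t ≤ brk t - 1 := Nat.sInf_le hprev
  omega

theorem brk_eq_brk_iff {s t : ℝ} (hs : s ∈ Ico 0 1) (ht : t ∈ Ico 0 1) :
    brk s = brk t ↔ s ∈ block (brk t) := by
  refine ⟨fun h => h ▸ (one_le_brk_and_mem_block hs).2, brk_eq_of_mem_block ?_⟩
  exact (one_le_brk_and_mem_block ht).1

theorem notMem_block_of_one_le {i : ℕ} {s : ℝ} (hs : 1 ≤ s) : s ∉ block i :=
  notMem_Ico_of_ge (by linarith [pow_pos (one_half_pos (α := ℝ)) i])

/-- The value of `W_R(x, ·)` on `C` for `x = (1 + t)/9 ∈ A'` with `t` in block `i`. -/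
def weightC (i : ℕ) (t : ℝ) : ℝ := (1 - (1 / 2) ^ i - t) * 2 ^ i

theorem weightC_nonneg {i : ℕ} {t : ℝ} (ht : t ∈ block i) : 0 ≤ weightC i t :=
  mul_nonneg (by linarith [ht.2]) (by positivity)

def radC (i : ℕ) : Set ℝ := (fun y => (9 * y - 5) / 2) ⁻¹' (Ico 0 1 ∩ radSet i)

/-- `W_R(x, ·)` for `x = (1 + t)/9 ∈ A'` with `t` in block `i`: the function `f^{W_R}_x` of the
paper. -/
def nbhdFun (i : ℕ) (t y : ℝ) : ℝ :=
  {y | 9 * y ∈ block i}.indicator 1 y + (pA' \ {y | 9 * y - 1 ∈ block i}).indicator 1 y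
    + (pB' ∩ Iic ((4 - t) / 9)).indicator 1 y + (pB'' ∩ Iic ((4 + t) / 9)).indicator 1 y
    + weightC i t * (radC i).indicator 1 y + (pC' ∩ Iic ((8 - weightC i t) / 9)).indicator 1 y
    + 1 / 5 * pD.indicator 1 y

theorem mem_Ico_of_le_of_lt {a b x : ℝ} (h₁ : a ≤ x) (h₂ : x < b) : x ∈ Ico a b := ⟨h₁, h₂⟩

set_option maxHeartbeats 1000000 in
theorem WR_eq_nbhdFun {x y : ℝ} (hx : x ∈ pA') (hy : y ∈ Icc 0 1) :
    WR x y = nbhdFun (brk (9 * x - 1)) (9 * x - 1) y := by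
  obtain ⟨hx₁, hx₂⟩ := hx
  obtain ⟨hy₀, hy₁⟩ := hy
  have ht : 9 * x - 1 ∈ Ico 0 1 := ⟨by linarith, by linarith⟩
  have hblock := (one_le_brk_and_mem_block ht).2
  simp only [WR, WRo, nbhdFun, weightC, radC, radSet, mem_ofPred_eq, mem_preimage, mem_inter_iff,
    Set.indicator_apply, Pi.one_apply, Set.mem_sdiff, mem_Iic]
  -- the nine cases are, in order, `y` in `A, A', B, B', B'', C, C', D` and `y = 1`
  rcases lt_or_ge y (1 / 9) with hA | hA
  on_goal 2 => rcases lt_or_ge y (2 / 9) with hA' | hA'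
  on_goal 3 => rcases lt_or_ge y (3 / 9) with hB | hB
  on_goal 4 => rcases lt_or_ge y (4 / 9) with hB' | hB'
  on_goal 5 => rcases lt_or_ge y (5 / 9) with hB'' | hB''
  on_goal 6 => rcases lt_or_ge y (7 / 9) with hC | hC
  on_goal 7 => rcases lt_or_ge y (8 / 9) with hC' | hC'
  on_goal 8 => rcases lt_or_ge y 1 with hD | hD
  all_goals simp (disch := grind) only [pA, pA', pB, pB', pB'', pC, pC', pD, mem_Ico_of_le_of_lt,
    notMem_Ico_of_lt, notMem_Ico_of_ge, notMem_block_of_one_le,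
    and_true, true_and, and_false, false_and, or_false, or_true, ↓reduceIte]
  · simp only [brk_eq_brk_iff (s := 9 * y) ⟨by linarith, by linarith⟩ ht]
    split_ifs <;> norm_num
  · simp only [ne_eq, eq_comm (a := brk (9 * x - 1)),
      brk_eq_brk_iff (s := 9 * y - 1) ⟨by linarith, by linarith⟩ ht, max_self]
    split_ifs <;> norm_num
  · norm_num
  · split_ifs <;> first | (exfalso; linarith) | norm_num
  · split_ifs <;> first | (exfalso; linarith) | norm_num
  · have hc₀ : 0 ≤ (1 - (1 / 2 : ℝ) ^ brk (9 * x - 1) - (9 * x - 1)) * 2 ^ brk (9 * x - 1) :=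
      mul_nonneg (by linarith [hblock.2]) (by positivity)
    split_ifs
    · rw [max_eq_left hc₀]; ring
    · norm_num
  · split_ifs <;> first | (exfalso; linarith) | norm_num
  · norm_num
  · norm_num

theorem integrable_indicator_one {s : Set ℝ} (hs : MeasurableSet s) :
    Integrable (s.indicator (1 : ℝ → ℝ)) μ01 :=
  (integrable_const 1).indicator hs

theorem integral_indicator_Icc_le {a b : ℝ} (hab : a ≤ b) :
    ∫ y, (Icc a b).indicator 1 y ∂μ01 ≤ b - a := by
  rw [integral_indicator_one measurableSet_Icc, ← Real.volume_real_Icc_of_le hab, measureReal_def,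
    measureReal_def]
  exact ENNReal.toReal_mono measure_Icc_lt_top.ne (Measure.restrict_le_self _)

theorem measurableSet_radC (i : ℕ) : MeasurableSet (radC i) :=
  (measurableSet_Ico.inter (measurableSet_radSet i)).preimage (by fun_prop)

theorem integrable_nbhdFun (i : ℕ) (t : ℝ) : Integrable (nbhdFun i t) μ01 := by
  have hblock (a : ℝ) : MeasurableSet {y : ℝ | 9 * y - a ∈ block i} :=
    measurableSet_Ico.preimage (by fun_prop)
  refine .add (.add (.add (.add (.add (.add ?_ ?_) ?_) ?_) (.const_mul ?_ _)) ?_) (.const_mul ?_ _)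
  all_goals refine integrable_indicator_one ?_
  · simpa using hblock 0
  · exact measurableSet_Ico.diff (hblock 1)
  all_goals first
    | exact measurableSet_Ico.inter measurableSet_Iic | exact measurableSet_radC i
    | exact measurableSet_Ico

def nbhdL1 (i : ℕ) (t : ℝ) : Lp ℝ 1 μ01 := (integrable_nbhdFun i t).toL1 _

theorem nbhdL1_ae_eq {x : ℝ} (hx : x ∈ pA') :
    ∀ᵐ y ∂μ01, nbhdL1 (brk (9 * x - 1)) (9 * x - 1) y = WR x y := by
  filter_upwards [(integrable_nbhdFun _ _).coeFn_toL1, ae_restrict_mem measurableSet_Icc]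
    with y hy hy01
  rw [nbhdL1, hy, WR_eq_nbhdFun hx hy01]

/-- The limit `g` of the paper. -/
def limNbhdFun (y : ℝ) : ℝ :=
  pA'.indicator 1 y + pB''.indicator 1 y + pC'.indicator 1 y + 1 / 5 * pD.indicator 1 y

theorem integrable_limNbhdFun : Integrable limNbhdFun μ01 :=
  .add (.add (.add (integrable_indicator_one measurableSet_Ico)
    (integrable_indicator_one measurableSet_Ico)) (integrable_indicator_one measurableSet_Ico))
    ((integrable_indicator_one measurableSet_Ico).const_mul _)

def limNbhdL1 : Lp ℝ 1 μ01 := integrable_limNbhdFun.toL1 _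

theorem abs_indicator_sub_indicator_le {s t u : Set ℝ} (h : s ∆ t ⊆ u) (y : ℝ) :
    |s.indicator (1 : ℝ → ℝ) y - t.indicator 1 y| ≤ u.indicator 1 y := by
  have h₀ : 0 ≤ (s ∆ t).indicator (1 : ℝ → ℝ) y := indicator_nonneg (fun _ _ => zero_le_one) y
  rw [← abs_indicator_symmDiff, abs_of_nonneg h₀]
  exact indicator_le_indicator_of_subset h (fun _ => zero_le_one) y

theorem abs_nbhdFun_sub_limNbhdFun_le {i : ℕ} {t : ℝ} (ht : t ∈ block i) (y : ℝ) :
    |nbhdFun i t y - limNbhdFun y| ≤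
      (Icc ((1 - 2 * (1 / 2) ^ i) / 9) ((1 - (1 / 2) ^ i) / 9)).indicator 1 y
      + (Icc ((2 - 2 * (1 / 2) ^ i) / 9) ((2 - (1 / 2) ^ i) / 9)).indicator 1 y
      + (Icc (3 / 9) ((4 - t) / 9)).indicator 1 y + (Icc ((4 + t) / 9) (5 / 9)).indicator 1 y
      + weightC i t * (Icc (5 / 9) (7 / 9)).indicator 1 y
      + (Icc ((8 - weightC i t) / 9) (8 / 9)).indicator 1 y := by
  have hw := weightC_nonneg ht
  have h₁ := abs_indicator_sub_indicator_le (s := {y | 9 * y ∈ block i}) (t := ∅)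
    (u := Icc ((1 - 2 * (1 / 2) ^ i) / 9) ((1 - (1 / 2) ^ i) / 9))
    (fun y hy => by simp only [mem_symmDiff, block] at hy ⊢; grind) y
  have h₂ := abs_indicator_sub_indicator_le (s := pA' \ {y | 9 * y - 1 ∈ block i}) (t := pA')
    (u := Icc ((2 - 2 * (1 / 2) ^ i) / 9) ((2 - (1 / 2) ^ i) / 9))
    (fun y hy => by simp only [mem_symmDiff, block] at hy ⊢; grind) y
  have h₃ := abs_indicator_sub_indicator_le (s := pB' ∩ Iic ((4 - t) / 9)) (t := ∅)
    (u := Icc (3 / 9) ((4 - t) / 9))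
    (fun y hy => by simp only [mem_symmDiff, pB'] at hy ⊢; grind) y
  have h₄ := abs_indicator_sub_indicator_le (s := pB'' ∩ Iic ((4 + t) / 9)) (t := pB'')
    (u := Icc ((4 + t) / 9) (5 / 9))
    (fun y hy => by simp only [mem_symmDiff, pB''] at hy ⊢; grind) y
  have h₅ := abs_indicator_sub_indicator_le (s := radC i) (t := ∅) (u := Icc (5 / 9) (7 / 9))
    (fun y hy => by simp only [mem_symmDiff, radC] at hy ⊢; grind) y
  have h₆ := abs_indicator_sub_indicator_le (s := pC' ∩ Iic ((8 - weightC i t) / 9)) (t := pC')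
    (u := Icc ((8 - weightC i t) / 9) (8 / 9))
    (fun y hy => by simp only [mem_symmDiff, pC'] at hy ⊢; grind) y
  simp only [indicator_empty, sub_zero, abs_le] at h₁ h₂ h₃ h₄ h₅ h₆
  rw [abs_le]
  unfold nbhdFun limNbhdFun
  constructor <;> nlinarith [h₁, h₂, h₃, h₄, h₅, h₆]


theorem norm_toL1_le_integral {α : Type*} [MeasurableSpace α] {μ : Measure α} {f g : α → ℝ}
    (hf : Integrable f μ) (hg : Integrable g μ) (h : ∀ y, |f y| ≤ g y) :
    ‖hf.toL1 f‖ ≤ ∫ y, g y ∂μ := by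
  rw [L1.norm_of_fun_eq_integral_norm]
  exact integral_mono hf.norm hg h

theorem norm_nbhdL1_sub_limNbhdL1_le {i : ℕ} {t : ℝ} (ht : t ∈ block i) :
    ‖nbhdL1 i t - limNbhdL1‖ ≤ (1 / 2) ^ i + (1 - t) + weightC i t := by
  have hp : 0 < (1 / 2 : ℝ) ^ i := by positivity
  have ht₁ : t < 1 := by linarith [ht.2]
  have hw := weightC_nonneg ht
  have hI {a b : ℝ} : Integrable ((Icc a b).indicator (1 : ℝ → ℝ)) μ01 :=
    integrable_indicator_one measurableSet_Icc
  rw [nbhdL1, limNbhdL1, ← Integrable.toL1_sub]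
  refine (norm_toL1_le_integral _ (.add (.add (.add (.add (.add hI hI) hI) hI) (hI.const_mul _)) hI)
    (abs_nbhdFun_sub_limNbhdFun_le ht)).trans ?_
  have hIc : Integrable (fun y => weightC i t * (Icc (5 / 9 : ℝ) (7 / 9)).indicator 1 y) μ01 :=
    hI.const_mul _
  simp (maxDischargeDepth := 8) only [integral_add', Integrable.add, hI, hIc, integral_const_mul]
  have e₁ := integral_indicator_Icc_le (a := (1 - 2 * (1 / 2) ^ i) / 9) (b := (1 - (1 / 2) ^ i) / 9)
    (by linarith)
  have e₂ := integral_indicator_Icc_le (a := (2 - 2 * (1 / 2) ^ i) / 9) (b := (2 - (1 / 2) ^ i) / 9)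
    (by linarith)
  have e₃ := integral_indicator_Icc_le (a := 3 / 9) (b := (4 - t) / 9) (by linarith)
  have e₄ := integral_indicator_Icc_le (a := (4 + t) / 9) (b := 5 / 9) (by linarith)
  have e₅ := mul_le_mul_of_nonneg_left (integral_indicator_Icc_le (a := 5 / 9) (b := 7 / 9)
    (by norm_num)) hw
  have e₆ := integral_indicator_Icc_le (a := (8 - weightC i t) / 9) (b := 8 / 9) (by linarith)
  linarith

theorem volume_preimage_affine_pC (S : Set ℝ) :
    volume ((fun y : ℝ => (9 * y - 5) / 2) ⁻¹' S) = ENNReal.ofReal (2 / 9) * volume S := by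
  have : (fun y : ℝ => (9 * y - 5) / 2) ⁻¹' S = (fun y => 9 / 2 * y) ⁻¹' ((· + -5 / 2) ⁻¹' S) := by
    ext y; simp only [mem_preimage]; ring_nf
  rw [this, Real.volume_preimage_mul_left (by norm_num), measure_preimage_add_right]
  norm_num

theorem radC_subset_pC (i : ℕ) : radC i ⊆ pC :=
  fun _ ⟨⟨h₀, h₁⟩, _⟩ => ⟨by linarith, by linarith⟩

theorem measureReal_radC_symmDiff {i j : ℕ} (hij : i < j) : μ01.real (radC i ∆ radC j) = 1 / 9 := by
  have hsub : radC i ∆ radC j ⊆ Icc 0 1 := fun y hy => by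
    obtain ⟨h₀, h₁⟩ : y ∈ pC := by rcases hy with h | h <;> exact radC_subset_pC _ h.1
    exact ⟨by linarith, by linarith⟩
  rw [measureReal_def, μ01, Measure.restrict_apply' measurableSet_Icc, inter_eq_left.2 hsub, radC,
    radC, ← preimage_symmDiff, ← inter_symmDiff_distrib_left, volume_preimage_affine_pC,
    volume_Ico_inter_radSet_symmDiff hij, ENNReal.toReal_mul, ENNReal.toReal_ofReal (by norm_num)]
  norm_num

theorem nbhdFun_of_mem_pC {i : ℕ} {t y : ℝ} (hy : y ∈ pC) :
    nbhdFun i t y = weightC i t * (radC i).indicator 1 y := by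
  obtain ⟨hy₁, hy₂⟩ := hy
  simp (disch := grind) only [nbhdFun, indicator_apply, mem_ofPred_eq, Set.mem_sdiff, mem_inter_iff,
    pA', pB', pB'', pC', pD, notMem_Ico_of_lt, notMem_Ico_of_ge, notMem_block_of_one_le, false_and,
    ↓reduceIte]
  ring

theorem le_norm_nbhdL1_sub_nbhdL1 {i j : ℕ} (hij : i < j) {s t δ : ℝ} (hs : δ ≤ weightC i s)
    (ht : δ ≤ weightC j t) : δ / 9 ≤ ‖nbhdL1 i s - nbhdL1 j t‖ := by
  have hD := (measurableSet_radC i).symmDiff (measurableSet_radC j)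
  rw [nbhdL1, nbhdL1, ← Integrable.toL1_sub, L1.norm_of_fun_eq_integral_norm]
  calc δ / 9 = ∫ y, δ * (radC i ∆ radC j).indicator 1 y ∂μ01 := by
        rw [integral_const_mul, integral_indicator_one hD, measureReal_radC_symmDiff hij]; ring
    _ ≤ ∫ y, ‖(nbhdFun i s - nbhdFun j t) y‖ ∂μ01 := by
        refine integral_mono ((integrable_indicator_one hD).const_mul δ)
          ((integrable_nbhdFun i s).sub (integrable_nbhdFun j t)).norm fun y => ?_
        by_cases hy : y ∈ radC i ∆ radC j
        · have hyC : y ∈ pC := by rcases hy with h | h <;> exact radC_subset_pC _ h.1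
          rw [indicator_of_mem hy, Pi.sub_apply, nbhdFun_of_mem_pC hyC, nbhdFun_of_mem_pC hyC,
            Real.norm_eq_abs]
          rcases hy with ⟨hi, hj⟩ | ⟨hj, hi⟩
          · simp only [indicator_of_mem hi, indicator_of_notMem hj, Pi.one_apply, mul_one,
              mul_zero, sub_zero]
            exact hs.trans (le_abs_self _)
          · simp only [indicator_of_mem hj, indicator_of_notMem hi, Pi.one_apply, mul_one,
              mul_zero, zero_sub, abs_neg]
            exact ht.trans (le_abs_self _)
        · rw [indicator_of_notMem hy, mul_zero]
          exact norm_nonneg _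

theorem exists_nbhdL1_mem_Tspace {i : ℕ} (hi : 1 ≤ i) {a b : ℝ} (hab : a < b)
    (hsub : Ioo a b ⊆ block i) : ∃ t ∈ Ioo a b, nbhdL1 i t ∈ Tspace WR := by
  set X := Ioo ((1 + a) / 9) ((1 + b) / 9)
  have : (ae (volume.restrict X)).NeBot := by
    rw [ae_neBot, Ne, Measure.restrict_eq_zero, Real.volume_Ioo, ENNReal.ofReal_eq_zero, not_le]
    linarith
  obtain ⟨x, hxX, hx⟩ :=
    ((ae_restrict_mem (s := X) measurableSet_Ioo).and (ae_restrict_of_ae (ae_mem_Tspace WR))).exists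
  have htx : 9 * x - 1 ∈ Ioo a b := ⟨by linarith [hxX.1], by linarith [hxX.2]⟩
  obtain ⟨ht₀, ht₁⟩ := block_subset_Ico hi (hsub htx)
  have hxA' : x ∈ pA' := ⟨by linarith, by linarith⟩
  refine ⟨9 * x - 1, htx, ?_⟩
  rw [← brk_eq_of_mem_block hi (hsub htx)]
  exact hx ⟨by linarith, by linarith⟩ _ (nbhdL1_ae_eq hxA')

theorem exists_nbhdL1_mem_Tspace_near {i : ℕ} (hi : 1 ≤ i) {δ : ℝ} (hδ : 0 < δ) (hδ' : δ ≤ 1 / 2) :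
    ∃ t, nbhdL1 i t ∈ Tspace WR ∧ δ ≤ weightC i t ∧
      ‖nbhdL1 i t - limNbhdL1‖ ≤ 3 * (1 / 2) ^ i + 2 * δ := by
  have hp : 0 < (1 / 2 : ℝ) ^ i := by positivity
  have hh : (1 / 2 : ℝ) ^ i * 2 ^ i = 1 := by rw [← mul_pow]; norm_num
  obtain ⟨t, ⟨ht₁, ht₂⟩, hT⟩ := exists_nbhdL1_mem_Tspace hi
    (a := 1 - (1 + 2 * δ) * (1 / 2) ^ i) (b := 1 - (1 + δ) * (1 / 2) ^ i) (by nlinarith)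
    fun s ⟨hs₁, hs₂⟩ => ⟨by nlinarith, by nlinarith⟩
  have hw₁ : δ ≤ weightC i t := by
    unfold weightC; nlinarith [pow_pos (two_pos (α := ℝ)) i]
  have hw₂ : weightC i t ≤ 2 * δ := by
    unfold weightC; nlinarith [pow_pos (two_pos (α := ℝ)) i]
  refine ⟨t, hT, hw₁, (norm_nbhdL1_sub_limNbhdL1_le ⟨by nlinarith, by nlinarith⟩).trans ?_⟩
  nlinarith

theorem limNbhdL1_mem_Tspace : limNbhdL1 ∈ Tspace WR := by
  refine (isClosed_Tspace WR).closure_subset (Metric.mem_closure_iff.2 fun r hr => ?_)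
  obtain ⟨n, hn⟩ := exists_pow_lt_of_lt_one (by positivity : 0 < r / 6) one_half_lt_one
  have hδ : 0 < min (r / 6) (1 / 2) := by positivity
  obtain ⟨t, hT, -, hnear⟩ :=
    exists_nbhdL1_mem_Tspace_near (i := n + 1) (by omega) hδ (min_le_right _ _)
  refine ⟨_, hT, ?_⟩
  rw [dist_comm, dist_eq_norm]
  have : (1 / 2 : ℝ) ^ (n + 1) ≤ (1 / 2) ^ n :=
    pow_le_pow_of_le_one (by norm_num) (by norm_num) (by omega)
  linarith [min_le_left (r / 6) (1 / 2)]

end RademacherGraphon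

end

open RademacherGraphon in
/-- The topological space `T(W_R)` of typical vertices of the Rademacher graphon is not
locally compact (in particular, it is not compact). -/
theorem TWR_not_locallyCompact : ¬ LocallyCompactSpace (Tspace WR) := by
  refine not_locallyCompactSpace_of_separated ⟨limNbhdL1, limNbhdL1_mem_Tspace⟩ fun r hr => ?_
  obtain ⟨n, hn⟩ := exists_pow_lt_of_lt_one (by positivity : 0 < r / 6) one_half_lt_one
  set δ := min (r / 6) (1 / 2)
  have hδ : 0 < δ := by positivity
  choose t hT hw hnear using fun k : ℕ =>
    exists_nbhdL1_mem_Tspace_near (i := n + 1 + k) (by omega) hδ (min_le_right _ _)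
  refine ⟨δ / 9, by positivity, fun k => ⟨nbhdL1 (n + 1 + k) (t k), hT k⟩, fun k => ?_,
    fun k l hkl => ?_⟩
  · rw [Subtype.dist_eq, dist_eq_norm]
    have : (1 / 2 : ℝ) ^ (n + 1 + k) ≤ (1 / 2) ^ n :=
      pow_le_pow_of_le_one (by norm_num) (by norm_num) (by omega)
    linarith [hnear k, min_le_left (r / 6) (1 / 2)]
  · rw [Subtype.dist_eq, dist_eq_norm]
    exact le_norm_nbhdL1_sub_nbhdL1 (by omega) (hw k) (hw l)
end
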